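/- arXiv:2401.11310 — 6 statements merged into one kernel-verified Lean document; each statement's English description precedes it below -/
import Mathlib

section
/- Let X be a compact metric space and let z ∈ X^ℤ be a non-periodic Toeplitz sequence with period structure (p_i). (i) If y and y' lie in the orbit closure O̅(z) and, for every i, y and y' have the same p_i-skeleton, then Per(y) = Per(y') and y(n) = y'(n) for every n ∈ Per(y). (ii) If moreover y ∈ O̅(z) is a Toeplitz sequence and y' ∈ O̅(z) has the same p_i-skeleton as y for every i, then y' = y. -/
open Filter Topology

section Defs

variable {X : Type*}

/-- The shift by `m`: `(shiftZ m z) n = z (n + m)`, so `shiftZ 1` is the left shift `S`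
and `shiftZ m = S^m`. -/
def shiftZ (m : ℤ) (z : ℤ → X) : ℤ → X := fun n => z (n + m)

/-- `Per_p(z)`: the set of positions `n` such that `z m = z n` for all `m ≡ n (mod p)`. -/
def PerSet (p : ℕ) (z : ℤ → X) : Set ℤ :=
  {n : ℤ | ∀ m : ℤ, (p : ℤ) ∣ m - n → z m = z n}

/-- `Per(z) = ⋃_{p ≥ 1} Per_p(z)`. -/
def PerFull (z : ℤ → X) : Set ℤ := {n : ℤ | ∃ p : ℕ, 1 ≤ p ∧ n ∈ PerSet p z}

/-- A Toeplitz sequence: every position is periodic. -/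
def IsToeplitz (z : ℤ → X) : Prop := ∀ n : ℤ, n ∈ PerFull z

/-- A non-periodic sequence: `S^m z ≠ z` for all `m ≠ 0`. -/
def NonPeriodicSeq (z : ℤ → X) : Prop := ∀ m : ℤ, m ≠ 0 → shiftZ m z ≠ z

/-- `u` and `v` have the same `p`-skeleton. -/
def SamePSkeleton (p : ℕ) (u v : ℤ → X) : Prop :=
  PerSet p u = PerSet p v ∧ ∀ n ∈ PerSet p u, u n = v n

/-- A period structure of a (non-periodic) Toeplitz sequence `z`. -/
def IsPeriodStructure (p : ℕ → ℕ) (z : ℤ → X) : Prop :=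
  (∀ i, 1 ≤ p i) ∧
  (∀ i q, 1 ≤ q → q < p i → PerSet q z ≠ PerSet (p i) z) ∧
  (∀ i, p i ∣ p (i + 1)) ∧
  (∀ n : ℤ, ∃ i, n ∈ PerSet (p i) z)

/-- A fast growing sequence of positive integers. -/
def FastGrowing (p : ℕ → ℕ) : Prop :=
  p 0 = 1 ∧ (∀ i, p i ∣ p (i + 1)) ∧ 3 ≤ p 1 ∧ ∀ i, 3 * p i ≤ p (i + 1)

/-- `oxDefined p i` is the set of positions of the Oxtoby sequence that are filled in
after step `i` of the inductive construction (step `i+1` fills, for each `k ≡ 0` or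
`-1 (mod p_{i+1}/p_i)`, the still-empty positions `J(i,k)` of the block
`[k p_i, (k+1) p_i)`). -/
def oxDefined (p : ℕ → ℕ) : ℕ → Set ℤ
  | 0 => ∅
  | i + 1 =>
      oxDefined p i ∪
        {n : ℤ | ∃ k : ℤ,
          (((p (i + 1) / p i : ℕ) : ℤ) ∣ k ∨ ((p (i + 1) / p i : ℕ) : ℤ) ∣ (k + 1)) ∧
          k * (p i : ℤ) ≤ n ∧ n < (k + 1) * (p i : ℤ) ∧ n ∉ oxDefined p i}

/-- `J(i,k)`: the set of positions in `[k p_i, (k+1) p_i)` still undefined after step `i`. -/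
def oxJ (p : ℕ → ℕ) (i : ℕ) (k : ℤ) : Set ℤ :=
  {n : ℤ | k * (p i : ℤ) ≤ n ∧ n < (k + 1) * (p i : ℤ) ∧ n ∉ oxDefined p i}

/-- The Oxtoby sequence `z((p_i),(x_i))`: position `n` receives the value `x_i` where `i`
is the first step after which `n` is defined. -/
noncomputable def oxtoby (p : ℕ → ℕ) (x : ℕ → X) : ℤ → X :=
  fun n => x (sInf {i : ℕ | n ∈ oxDefined p i})

/-- The reverse of a bi-infinite sequence: `x⁻¹(n) = x(-n)`. -/
def revSeq (z : ℤ → X) : ℤ → X := fun n => z (-n)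

/-- `[n0, n1]` is a maximal `p`-periodic block in `x`. -/
def IsMaxPeriodicBlock (p : ℕ) (x : ℤ → X) (n0 n1 : ℤ) : Prop :=
  n0 ≤ n1 ∧ Set.Icc n0 n1 ⊆ PerSet p x ∧
    ∀ n0' n1' : ℤ, n0' ≤ n0 → n1 ≤ n1' → Set.Icc n0' n1' ⊆ PerSet p x →
      n0' = n0 ∧ n1' = n1

variable [TopologicalSpace X]

/-- The orbit closure of `z` in `X^ℤ` with the product topology. -/
def orbitClosure (z : ℤ → X) : Set (ℤ → X) :=
  closure {y : ℤ → X | ∃ m : ℤ, y = shiftZ m z}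

/-- The ω-limit set of a sequence: all limits of convergent subsequences. -/
def omegaLimitSet (x : ℕ → X) : Set X :=
  {a : X | ∃ φ : ℕ → ℕ, StrictMono φ ∧ Tendsto (x ∘ φ) atTop (𝓝 a)}

/-- Two sequences have the same topological type if exactly the same subsequences
converge. -/
def SameTopType {Y : Type*} [TopologicalSpace Y] (x : ℕ → X) (y : ℕ → Y) : Prop :=
  ∀ φ : ℕ → ℕ, StrictMono φ →
    ((∃ a, Tendsto (x ∘ φ) atTop (𝓝 a)) ↔ (∃ a, Tendsto (y ∘ φ) atTop (𝓝 a)))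

/-- `f` is a conjugacy between the shift-invariant sets `A` and `B`: a homeomorphism
from `A` onto `B` commuting with the shift. -/
def IsConjugacy (A B : Set (ℤ → X)) (f : (ℤ → X) → (ℤ → X)) : Prop :=
  Set.MapsTo f A B ∧ ContinuousOn f A ∧
    (∃ g : (ℤ → X) → (ℤ → X), Set.MapsTo g B A ∧ ContinuousOn g B ∧
      (∀ a ∈ A, g (f a) = a) ∧ (∀ b ∈ B, f (g b) = b)) ∧
    ∀ a ∈ A, f (shiftZ 1 a) = shiftZ 1 (f a)

/-- The `m`-th iterate (for `m : ℤ`) of a self-homeomorphism. -/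
def iterZ {Y : Type*} [TopologicalSpace Y] (f : Y ≃ₜ Y) (m : ℤ) (a : Y) : Y :=
  ((f.toEquiv ^ m : Equiv.Perm Y)) a

end Defs

/-! If `S^m z → y` along an ultrafilter `U` on `ℤ`, then modulo each `N` the shifts `m` lie
`U`-eventually in one residue class `r`, and because `z` is Toeplitz the `N`-skeleton of `y` is
the `N`-skeleton of `z` shifted by `r`. If `y'` is reached along `U'` with residue `s` and has the
same `p_i`-skeleton as `y`, the `p_i`-skeleton of `z` is therefore `(s - r)`-periodic, hence
`gcd(p_i, s - r)`-periodic, and essentiality of `p_i` forces `p_i ∣ s - r`: `U` and `U'` have the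
same residues modulo every `p_i`. A position of `y` with period `q` comes from a position of `z`
with period `q`, which by Bezout also has period `e = gcd(q, p_t)` once `t` maximises this gcd;
modulo `e` both ultrafilters have the same residue, so the position has period `e` in `y'` and
carries the same value there. -/

open Function

section Skeleton

variable {X : Type*} {u v : ℤ → X}

lemma mem_perSet_of_dvd_sub {p : ℕ} {m n : ℤ} (hn : n ∈ PerSet p u) (h : (p : ℤ) ∣ m - n) :
    m ∈ PerSet p u := fun k hk =>
  (hn k (by simpa using dvd_add hk h)).trans (hn m h).symm

lemma perSet_mono {a b : ℕ} (h : a ∣ b) (u : ℤ → X) : PerSet a u ⊆ PerSet b u :=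
  fun _ hn m hm => hn m ((Int.natCast_dvd_natCast.2 h).trans hm)

lemma apply_eq_of_gcd_dvd_sub {a b : ℕ} {m n : ℤ} (hn : n ∈ PerSet a u) (hm : m ∈ PerSet b u)
    (h : (Nat.gcd a b : ℤ) ∣ m - n) : u m = u n := by
  obtain ⟨k, hk⟩ := h
  have hbez : (Nat.gcd a b : ℤ) = a * Int.gcdA a b + b * Int.gcdB a b := by
    rw [← Int.gcd_eq_gcd_ab, Int.gcd_natCast_natCast]
  have hw : n + a * (Int.gcdA a b * k) = m - b * (Int.gcdB a b * k) := by
    linear_combination -hk - k * hbez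
  calc u m = u (m - b * (Int.gcdB a b * k)) := (hm _ ⟨-(Int.gcdB a b * k), by ring⟩).symm
    _ = u n := by rw [← hw]; exact hn _ ⟨Int.gcdA a b * k, by ring⟩

lemma SamePSkeleton.symm {p : ℕ} (h : SamePSkeleton p u v) : SamePSkeleton p v u :=
  ⟨h.1.symm, fun n hn => (h.2 n (h.1 ▸ hn)).symm⟩

open Classical in
/-- The `p`-skeleton of `u` as one sequence, which can then be shifted and tested for periods. -/
noncomputable def skeleton (p : ℕ) (u : ℤ → X) : ℤ → Option X :=
  fun n => if n ∈ PerSet p u then some (u n) else none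

lemma SamePSkeleton.skeleton_eq {p : ℕ} (h : SamePSkeleton p u v) :
    skeleton p u = skeleton p v := by
  funext n
  by_cases hn : n ∈ PerSet p u
  · simp [skeleton, hn, h.1 ▸ hn, h.2 n hn]
  · simp [skeleton, hn, ← h.1]

lemma skeleton_periodic (p : ℕ) (u : ℤ → X) : Periodic (skeleton p u) p := by
  intro n
  have hmem : n + p ∈ PerSet p u ↔ n ∈ PerSet p u :=
    ⟨fun h => mem_perSet_of_dvd_sub h (by simp), fun h => mem_perSet_of_dvd_sub h (by simp)⟩
  by_cases hn : n ∈ PerSet p u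
  · simp [skeleton, hn, hmem.2 hn, hn (n + p) (by simp)]
  · simp [skeleton, hn, hmem]

lemma perSet_subset_of_periodic_skeleton {p c : ℕ} (h : Periodic (skeleton p u) c) :
    PerSet p u ⊆ PerSet c u := by
  intro n hn m ⟨k, hk⟩
  have hsk : skeleton p u m = skeleton p u n := by
    rw [show m = n + k * c by linarith]
    exact h.int_mul k n
  simp only [skeleton, hn, if_true] at hsk
  split_ifs at hsk
  exact Option.some_injective _ hsk

lemma Function.Periodic.intGcd {α : Type*} {f : ℤ → α} {a b : ℤ} (ha : Periodic f a)
    (hb : Periodic f b) : Periodic f (Int.gcd a b) := by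
  rw [Int.gcd_eq_gcd_ab, mul_comm a, mul_comm b]
  exact (ha.int_mul _).add_period (hb.int_mul _)

lemma natCast_dvd_of_periodic_skeleton {p : ℕ} (hp : 0 < p)
    (hess : ∀ q, 1 ≤ q → q < p → PerSet q u ≠ PerSet p u) {d : ℤ}
    (hd : Periodic (skeleton p u) d) : (p : ℤ) ∣ d := by
  set g := Int.gcd p d
  have hgp : g ∣ p := by exact_mod_cast Int.gcd_dvd_left (p : ℤ) d
  have hg : 0 < g := Int.gcd_pos_of_ne_zero_left _ (by omega)
  have heq : PerSet g u = PerSet p u := (perSet_mono hgp u).antisymm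
    (perSet_subset_of_periodic_skeleton ((skeleton_periodic p u).intGcd hd))
  have hg_eq : g = p := le_antisymm (Nat.le_of_dvd hp hgp) (not_lt.1 fun hlt => hess g hg hlt heq)
  exact hg_eq ▸ Int.gcd_dvd_right _ _

end Skeleton

lemma Ultrafilter.exists_eventually_dvd_sub (U : Ultrafilter ℤ) {N : ℕ} (hN : N ≠ 0) :
    ∃ r : ℤ, ∀ᶠ m in U, (N : ℤ) ∣ m - r := by
  have : NeZero N := ⟨hN⟩
  obtain ⟨c, hc⟩ := (U.map (Int.cast : ℤ → ZMod N)).eq_pure_of_finite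
  have hcU : {m : ℤ | (m : ZMod N) = c} ∈ U := (Ultrafilter.ext_iff.1 hc {c}).2 rfl
  refine ⟨c.cast, ?_⟩
  filter_upwards [hcU] with m hm
  rw [← ZMod.intCast_eq_intCast_iff_dvd_sub, ZMod.intCast_zmod_cast, hm]

lemma exists_forall_gcd_dvd_gcd {p : ℕ → ℕ} (hp : ∀ i, p i ∣ p (i + 1)) {q : ℕ}
    (hq : 0 < q) :
    ∃ t, ∀ l, Nat.gcd q (p l) ∣ Nat.gcd q (p t) := by
  have hchain : ∀ i j, i ≤ j → Nat.gcd q (p i) ∣ Nat.gcd q (p j) := by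
    intro i j hij
    induction j, hij using Nat.le_induction with
    | base => exact dvd_rfl
    | succ j _ ih => exact ih.trans (Nat.gcd_dvd_gcd_of_dvd_right q (hp j))
  have hbdd : BddAbove (Set.range fun l => Nat.gcd q (p l)) :=
    ⟨q, by rintro _ ⟨l, rfl⟩; exact Nat.le_of_dvd hq (Nat.gcd_dvd_left _ _)⟩
  obtain ⟨t, ht⟩ := Nat.sSup_mem (Set.range_nonempty _) hbdd
  refine ⟨t, fun l => ?_⟩
  have hmax : Nat.gcd q (p (max l t)) = Nat.gcd q (p t) :=
    le_antisymm ((le_csSup hbdd ⟨max l t, rfl⟩).trans_eq ht.symm)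
      (Nat.le_of_dvd (Nat.gcd_pos_of_pos_left _ hq) (hchain t _ (le_max_right l t)))
  exact hmax ▸ hchain l _ (le_max_left l t)

lemma perSet_subset_perSet_gcd {X : Type*} {z : ℤ → X} {p : ℕ → ℕ}
    (hcov : ∀ n, ∃ i, n ∈ PerSet (p i) z) {q t : ℕ}
    (ht : ∀ l, Nat.gcd q (p l) ∣ Nat.gcd q (p t)) :
    PerSet q z ⊆ PerSet (Nat.gcd q (p t)) z := by
  intro n hn m hm
  obtain ⟨l, hl⟩ := hcov m
  exact apply_eq_of_gcd_dvd_sub hn hl ((Int.natCast_dvd_natCast.2 (ht l)).trans hm)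

section OrbitClosure

variable {X : Type*} [TopologicalSpace X] {z y y' : ℤ → X} {U U' : Ultrafilter ℤ}

lemma exists_ultrafilter_tendsto_shiftZ (hy : y ∈ orbitClosure z) :
    ∃ U : Ultrafilter ℤ, Tendsto (fun m => shiftZ m z) U (𝓝 y) := by
  have hy : ClusterPt y (map (fun m => shiftZ m z) ⊤) := by
    rw [map_top, ← mem_closure_iff_clusterPt]
    simpa [orbitClosure, Set.range, eq_comm] using hy
  obtain ⟨U, -, hU⟩ := mapClusterPt_iff_ultrafilter.1 hy
  exact ⟨U, hU⟩

variable [T2Space X]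

lemma apply_eq_of_add_mem_perSet (hU : Tendsto (fun m => shiftZ m z) U (𝓝 y)) {N : ℕ}
    {r n : ℤ} (hr : ∀ᶠ m in U, (N : ℤ) ∣ m - r) (hn : n + r ∈ PerSet N z) :
    y n = z (n + r) := by
  refine tendsto_nhds_unique (tendsto_pi_nhds.1 hU n) (tendsto_const_nhds.congr' ?_)
  filter_upwards [hr] with m hm
  exact (hn (n + m) (by simpa using hm)).symm

lemma mem_perSet_of_add_mem_perSet (hU : Tendsto (fun m => shiftZ m z) U (𝓝 y)) {N : ℕ}
    {r n : ℤ} (hr : ∀ᶠ m in U, (N : ℤ) ∣ m - r) (hn : n + r ∈ PerSet N z) :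
    n ∈ PerSet N y := by
  intro m hm
  have hmr : m + r ∈ PerSet N z := mem_perSet_of_dvd_sub hn (by simpa using hm)
  rw [apply_eq_of_add_mem_perSet hU hr hmr, apply_eq_of_add_mem_perSet hU hr hn]
  exact hn _ (by simpa using hm)

lemma add_mem_perSet_of_mem_perSet (hz : IsToeplitz z)
    (hU : Tendsto (fun m => shiftZ m z) U (𝓝 y)) {N : ℕ} {r n : ℤ}
    (hr : ∀ᶠ m in U, (N : ℤ) ∣ m - r) (hn : n ∈ PerSet N y) :
    n + r ∈ PerSet N z ∧ z (n + r) = y n := by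
  suffices h : ∀ μ, (N : ℤ) ∣ μ - (n + r) → z μ = y n from
    ⟨fun μ hμ => (h μ hμ).trans (h _ (by simp)).symm, h _ (by simp)⟩
  intro μ hμ
  obtain ⟨P, hP, hμP⟩ := hz μ
  obtain ⟨s, hs⟩ := U.exists_eventually_dvd_sub (N := P) (by omega)
  -- `k` lies in the `U`-residue classes of the shifts modulo `N` and modulo a period `P` of `μ`
  obtain ⟨k, hkr, hks⟩ := (hr.and hs).exists
  have hk : ∀ᶠ m in U, (P : ℤ) ∣ m - k :=
    hs.mono fun m hm => by simpa using dvd_sub hm hks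
  have hμk : μ - k - n = (μ - (n + r)) - (k - r) := by ring
  calc z μ = y (μ - k) := by
        rw [apply_eq_of_add_mem_perSet hU hk (n := μ - k) (by simpa using hμP), sub_add_cancel]
    _ = y n := hn _ (hμk ▸ dvd_sub hμ hkr)

lemma skeleton_eq_shiftZ (hz : IsToeplitz z) (hU : Tendsto (fun m => shiftZ m z) U (𝓝 y))
    {N : ℕ} {r : ℤ} (hr : ∀ᶠ m in U, (N : ℤ) ∣ m - r) :
    skeleton N y = shiftZ r (skeleton N z) := by
  funext n
  by_cases hn : n ∈ PerSet N y
  · obtain ⟨hnr, hzn⟩ := add_mem_perSet_of_mem_perSet hz hU hr hn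
    simp [skeleton, shiftZ, hn, hnr, hzn]
  · have hnr : n + r ∉ PerSet N z := fun h => hn (mem_perSet_of_add_mem_perSet hU hr h)
    simp [skeleton, shiftZ, hn, hnr]

lemma eventually_dvd_sub_of_samePSkeleton (hz : IsToeplitz z)
    (hU : Tendsto (fun m => shiftZ m z) U (𝓝 y))
    (hU' : Tendsto (fun m => shiftZ m z) U' (𝓝 y')) {p : ℕ} (hp : 0 < p)
    (hess : ∀ q, 1 ≤ q → q < p → PerSet q z ≠ PerSet p z)
    (hsk : SamePSkeleton p y y') {r : ℤ} (hr : ∀ᶠ m in U, (p : ℤ) ∣ m - r) :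
    ∀ᶠ m in U', (p : ℤ) ∣ m - r := by
  obtain ⟨s, hs⟩ := U'.exists_eventually_dvd_sub hp.ne'
  have hshift : shiftZ r (skeleton p z) = shiftZ s (skeleton p z) := by
    rw [← skeleton_eq_shiftZ hz hU hr, ← skeleton_eq_shiftZ hz hU' hs, hsk.skeleton_eq]
  have hper : Periodic (skeleton p z) (s - r) := fun w => by
    rw [show w + (s - r) = w - r + s by ring]
    simpa [shiftZ] using (congrFun hshift (w - r)).symm
  have hd := natCast_dvd_of_periodic_skeleton hp hess hper
  filter_upwards [hs] with m hm
  simpa using dvd_add hm hd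

lemma mem_perFull_and_eq_of_samePSkeleton (hz : IsToeplitz z) {p : ℕ → ℕ}
    (hp : IsPeriodStructure p z) (hU : Tendsto (fun m => shiftZ m z) U (𝓝 y))
    (hU' : Tendsto (fun m => shiftZ m z) U' (𝓝 y')) (hsk : ∀ i, SamePSkeleton (p i) y y')
    {n : ℤ} (hn : n ∈ PerFull y) : n ∈ PerFull y' ∧ y' n = y n := by
  obtain ⟨hpos, hess, hdvd, hcov⟩ := hp
  obtain ⟨q, hq, hnq⟩ := hn
  obtain ⟨t, ht⟩ := exists_forall_gcd_dvd_gcd hdvd hq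
  obtain ⟨r, hr⟩ := U.exists_eventually_dvd_sub (N := q * p t) (by have := hpos t; positivity)
  have hrq : ∀ᶠ m in U, (q : ℤ) ∣ m - r :=
    hr.mono fun m hm => (Int.natCast_dvd_natCast.2 (dvd_mul_right q (p t))).trans hm
  have hrt : ∀ᶠ m in U, (p t : ℤ) ∣ m - r :=
    hr.mono fun m hm => (Int.natCast_dvd_natCast.2 (dvd_mul_left (p t) q)).trans hm
  have hre : ∀ᶠ m in U', (Nat.gcd q (p t) : ℤ) ∣ m - r :=
    (eventually_dvd_sub_of_samePSkeleton hz hU hU' (hpos t) (hess t) (hsk t) hrt).mono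
      fun m hm => (Int.natCast_dvd_natCast.2 (Nat.gcd_dvd_right _ _)).trans hm
  obtain ⟨hnr, hzn⟩ := add_mem_perSet_of_mem_perSet hz hU hrq hnq
  have hnre := perSet_subset_perSet_gcd hcov ht hnr
  exact ⟨⟨_, Nat.gcd_pos_of_pos_left _ hq, mem_perSet_of_add_mem_perSet hU' hre hnre⟩,
    (apply_eq_of_add_mem_perSet hU' hre hnre).trans hzn⟩

end OrbitClosure

theorem periodic_part_of_same_skeleton_general {X : Type*} [MetricSpace X]
    (z : ℤ → X) (hz : IsToeplitz z)
    (p : ℕ → ℕ) (hp : IsPeriodStructure p z)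
    (y y' : ℤ → X) (hy : y ∈ orbitClosure z) (hy' : y' ∈ orbitClosure z)
    (hsk : ∀ i, SamePSkeleton (p i) y y') :
    (PerFull y = PerFull y' ∧ ∀ n ∈ PerFull y, y n = y' n) ∧
      (IsToeplitz y → y' = y) := by
  obtain ⟨U, hU⟩ := exists_ultrafilter_tendsto_shiftZ hy
  obtain ⟨U', hU'⟩ := exists_ultrafilter_tendsto_shiftZ hy'
  have to_y' {n} (hn : n ∈ PerFull y) := mem_perFull_and_eq_of_samePSkeleton hz hp hU hU' hsk hn
  have to_y {n} (hn : n ∈ PerFull y') :=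
    mem_perFull_and_eq_of_samePSkeleton hz hp hU' hU (fun i => (hsk i).symm) hn
  refine ⟨⟨Set.ext fun n => ⟨fun hn => (to_y' hn).1, fun hn => (to_y hn).1⟩,
    fun n hn => (to_y' hn).2.symm⟩, fun hty => funext fun n => (to_y' (hty n)).2⟩

/-- Lemma `EQF`: if `y, y'` in the orbit closure of a non-periodic Toeplitz
sequence `z` have the same `p_i`-skeleton for all `i` (where `(p_i)` is a period structure
of `z`), then they have the same periodic part and agree on it; if moreover `y` is
Toeplitz, then `y' = y`. -/
theorem periodic_part_of_same_skeleton {X : Type*} [MetricSpace X] [CompactSpace X]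
    (z : ℤ → X) (hz : IsToeplitz z) (hnp : NonPeriodicSeq z)
    (p : ℕ → ℕ) (hp : IsPeriodStructure p z)
    (y y' : ℤ → X) (hy : y ∈ orbitClosure z) (hy' : y' ∈ orbitClosure z)
    (hsk : ∀ i, SamePSkeleton (p i) y y') :
    (PerFull y = PerFull y' ∧ ∀ n ∈ PerFull y, y n = y' n) ∧
      (IsToeplitz y → y' = y) :=
  periodic_part_of_same_skeleton_general z hz p hp y y' hy hy' hsk
end

section
/- Let X be a compact metric space and let z ∈ X^ℤ be a Toeplitz sequence whose orbit closure O̅(z) is infinite. Then O̅(z) contains a non-Toeplitz sequence, i.e. there exists y ∈ O̅(z) with Per(y) ≠ ℤ. -/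
open Filter Topology

section Helpers

variable {X : Type*} [MetricSpace X] [CompactSpace X]

lemma perSet_mono_s1 {z : ℤ → X} {q Q : ℕ} (h : q ∣ Q) : PerSet q z ⊆ PerSet Q z := by
  intro n hn m hm
  exact hn m (dvd_trans (Int.natCast_dvd_natCast.mpr h) hm)

/-- Auxiliary sequence of highly divisible periods built from a choice of periods `q`. -/
def auxP (q : ℤ → ℕ) : ℕ → ℕ
  | 0 => q 0
  | j + 1 => auxP q j * (j + 1) * q ((j : ℤ) + 1) * q (-((j : ℤ) + 1))

lemma auxP_pos (q : ℤ → ℕ) (hq : ∀ n, 1 ≤ q n) : ∀ j, 1 ≤ auxP q j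
  | 0 => hq 0
  | j + 1 => by
    have h0 := auxP_pos q hq j
    have h1 := hq ((j : ℤ) + 1)
    have h2 := hq (-((j : ℤ) + 1))
    have : 1 * 1 * 1 * 1 ≤ auxP q j * (j + 1) * q ((j : ℤ) + 1) * q (-((j : ℤ) + 1)) :=
      Nat.mul_le_mul (Nat.mul_le_mul (Nat.mul_le_mul h0 (by omega)) h1) h2
    simpa [auxP] using this

lemma auxP_dvd_succ (q : ℤ → ℕ) (j : ℕ) : auxP q j ∣ auxP q (j + 1) :=
  ⟨(j + 1) * q ((j : ℤ) + 1) * q (-((j : ℤ) + 1)), by simp [auxP]; ring⟩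

lemma auxP_dvd (q : ℤ → ℕ) {i j : ℕ} (h : i ≤ j) : auxP q i ∣ auxP q j := by
  induction j with
  | zero => simpa [Nat.le_zero.mp h]
  | succ j ih =>
    rcases Nat.lt_or_ge i (j + 1) with h' | h'
    · exact (ih (by omega)).trans (auxP_dvd_succ q j)
    · have : i = j + 1 := by omega
      subst this; exact dvd_rfl

lemma nat_dvd_auxP (q : ℤ → ℕ) {Q j : ℕ} (hQ : 1 ≤ Q) (hQj : Q ≤ j) : Q ∣ auxP q j := by
  obtain ⟨i, rfl⟩ : ∃ i, Q = i + 1 := ⟨Q - 1, by omega⟩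
  have h1 : (i + 1) ∣ auxP q (i + 1) :=
    ⟨auxP q i * q ((i : ℤ) + 1) * q (-((i : ℤ) + 1)), by simp [auxP]; ring⟩
  exact h1.trans (auxP_dvd q hQj)

lemma q_dvd_auxP (q : ℤ → ℕ) {n : ℤ} {j : ℕ} (h : n.natAbs ≤ j) : q n ∣ auxP q j := by
  induction j with
  | zero =>
    have : n = 0 := by omega
    subst this; exact dvd_rfl
  | succ j ih =>
    rcases Nat.lt_or_ge n.natAbs (j + 1) with h' | h'
    · exact (ih (by omega)).trans (auxP_dvd_succ q j)
    · have habs : n.natAbs = j + 1 := by omega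
      rcases Int.natAbs_eq n with he | he
      · have : n = (j : ℤ) + 1 := by rw [he, habs]; push_cast; ring
        subst this
        exact ⟨auxP q j * (j + 1) * q (-((j : ℤ) + 1)), by simp [auxP]; ring⟩
      · have : n = -((j : ℤ) + 1) := by rw [he, habs]; push_cast; ring
        subst this
        exact ⟨auxP q j * (j + 1) * q ((j : ℤ) + 1), by simp [auxP]; ring⟩

lemma exists_subseq_shift (z : ℤ → X) (c : ℕ → ℤ) :
    ∃ φ : ℕ → ℕ, StrictMono φ ∧ ∃ y, y ∈ orbitClosure z ∧
      Tendsto (fun k => shiftZ (c (φ k)) z) atTop (𝓝 y) := by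
  obtain ⟨y, -, φ, hφ, hy⟩ :=
    isCompact_univ.tendsto_subseq (x := fun k => shiftZ (c k) z) (fun k => Set.mem_univ _)
  exact ⟨φ, hφ, y,
    mem_closure_of_tendsto hy (Filter.Eventually.of_forall fun k => ⟨c (φ k), rfl⟩), hy⟩

lemma exists_subseq_residues (p : ℕ → ℕ) (hp : ∀ j, 1 ≤ p j) (a : ℕ → ℤ) :
    ∃ φ : ℕ → ℕ, StrictMono φ ∧ ∃ s : ℕ → ℤ,
      ∀ j, ∀ᶠ k in atTop, (p j : ℤ) ∣ a (φ k) - s j := by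
  set v : ℕ → (ℕ → ℤ) := fun k j => a k % (p j) with hv
  have hvmem : ∀ k, v k ∈ Set.pi Set.univ (fun j => Set.Icc (0 : ℤ) ((p j : ℤ) - 1)) := by
    intro k j _
    have hpj : (0 : ℤ) < (p j : ℤ) := by exact_mod_cast hp j
    have h1 : 0 ≤ a k % (p j) := Int.emod_nonneg _ (by omega)
    have h2 : a k % (p j) < (p j : ℤ) := Int.emod_lt_of_pos _ hpj
    simp only [hv, Set.mem_Icc]
    omega
  have hcomp : IsCompact (Set.pi Set.univ fun j => Set.Icc (0 : ℤ) ((p j : ℤ) - 1)) :=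
    isCompact_univ_pi fun j => (Set.finite_Icc _ _).isCompact
  obtain ⟨L, -, φ, hφ, hL⟩ := hcomp.tendsto_subseq hvmem
  refine ⟨φ, hφ, L, fun j => ?_⟩
  have hj : Tendsto (fun k => v (φ k) j) atTop (𝓝 (L j)) := tendsto_pi_nhds.mp hL j
  rw [nhds_discrete ℤ, tendsto_pure] at hj
  filter_upwards [hj] with k hk
  refine ⟨a (φ k) / (p j), ?_⟩
  have := Int.emod_add_mul_ediv (a (φ k)) (p j)
  have hk' : a (φ k) % (p j) = L j := hk
  linarith

lemma skel {z y : ℤ → X} {c : ℕ → ℤ} {P : ℕ} {s : ℤ}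
    (h1 : ∀ᶠ k in atTop, (P : ℤ) ∣ c k - s)
    (h2 : Tendsto (fun k => shiftZ (c k) z) atTop (𝓝 y))
    {n : ℤ} (hn : (n + s) ∈ PerSet P z) : y n = z (n + s) := by
  have hcoord : Tendsto (fun k => z (n + c k)) atTop (𝓝 (y n)) := tendsto_pi_nhds.mp h2 n
  have hev : (fun k => z (n + c k)) =ᶠ[atTop] (fun _ => z (n + s)) := by
    filter_upwards [h1] with k hk
    exact hn (n + c k) (by rw [show n + c k - (n + s) = c k - s by ring]; exact hk)
  exact tendsto_nhds_unique (hcoord.congr' hev) tendsto_const_nhds |>.symm ▸ rfl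

lemma skel' {z y : ℤ → X} {c : ℕ → ℤ} {P : ℕ} {s : ℤ}
    (h1 : ∀ᶠ k in atTop, (P : ℤ) ∣ c k - s)
    (h2 : Tendsto (fun k => shiftZ (c k) z) atTop (𝓝 y))
    {n : ℤ} (hn : (n + s) ∈ PerSet P z) : y n = z (n + s) := skel h1 h2 hn

lemma rigid {z y y' : ℤ → X} {p : ℕ → ℕ} {s : ℕ → ℤ}
    (hwin : ∀ (j : ℕ) (n : ℤ), n.natAbs ≤ j → n ∈ PerSet (p j) z)
    (hy : ∀ (j : ℕ) (n : ℤ), (n + s j) ∈ PerSet (p j) z → y n = z (n + s j))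
    (hy' : ∀ (j : ℕ) (n : ℤ), (n + s j) ∈ PerSet (p j) z → y' n = z (n + s j))
    (ht : IsToeplitz y) (ht' : IsToeplitz y') : y = y' := by
  funext n
  obtain ⟨q, hq1, hq⟩ := ht n
  obtain ⟨q', hq1', hq'⟩ := ht' n
  set Q := q * q' with hQdef
  have hQ1 : 1 ≤ Q := Nat.mul_pos hq1 hq1'
  have hQ0 : (0 : ℤ) < (Q : ℤ) := by exact_mod_cast hQ1
  have hnQ : n ∈ PerSet Q y := perSet_mono_s1 (dvd_mul_right q q') hq
  have hnQ' : n ∈ PerSet Q y' := perSet_mono_s1 (dvd_mul_left q' q) hq'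
  set m : ℤ := (n + s Q) % (Q : ℤ) with hm
  have hm0 : 0 ≤ m := Int.emod_nonneg _ (by omega)
  have hmQ : m < (Q : ℤ) := Int.emod_lt_of_pos _ hQ0
  have hmabs : m.natAbs ≤ Q := by omega
  have hmem : m ∈ PerSet (p Q) z := hwin Q m hmabs
  have hdvd : (Q : ℤ) ∣ (m - s Q) - n := by
    refine ⟨-((n + s Q) / (Q : ℤ)), ?_⟩
    have := Int.emod_add_mul_ediv (n + s Q) (Q : ℤ)
    have h' : m = (n + s Q) % (Q : ℤ) := hm
    linarith [this]
  have h1 : y (m - s Q) = z m := by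
    have := hy Q (m - s Q) (by rw [show m - s Q + s Q = m by ring]; exact hmem)
    rwa [show m - s Q + s Q = m by ring] at this
  have h2 : y' (m - s Q) = z m := by
    have := hy' Q (m - s Q) (by rw [show m - s Q + s Q = m by ring]; exact hmem)
    rwa [show m - s Q + s Q = m by ring] at this
  have e1 : y (m - s Q) = y n := hnQ _ hdvd
  have e2 : y' (m - s Q) = y' n := hnQ' _ hdvd
  rw [← e1, ← e2, h1, h2]

end Helpers

/-- Lemma `non-Toeplitz exist`: any infinite Toeplitz system contains a
non-Toeplitz sequence. -/
theorem exists_nonToeplitz_of_infinite {X : Type*} [MetricSpace X] [CompactSpace X]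
    (z : ℤ → X) (hz : IsToeplitz z) (hinf : (orbitClosure z).Infinite) :
    ∃ y ∈ orbitClosure z, ¬ IsToeplitz y := by
  by_contra hcon
  push_neg at hcon
  classical
  have hz' : ∀ n : ℤ, ∃ pp : ℕ, 1 ≤ pp ∧ n ∈ PerSet pp z := hz
  choose q hq1 hq using hz'
  set p : ℕ → ℕ := auxP q with hp
  have hp1 : ∀ j, 1 ≤ p j := auxP_pos q hq1
  have hpd : ∀ {i j : ℕ}, i ≤ j → p i ∣ p j := fun h => auxP_dvd q h
  have hwin : ∀ (j : ℕ) (n : ℤ), n.natAbs ≤ j → n ∈ PerSet (p j) z :=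
    fun j n h => perSet_mono_s1 (q_dvd_auxP q h) (hq n)
  have hQd : ∀ {Q j : ℕ}, 1 ≤ Q → Q ≤ j → Q ∣ p j := fun h1 h2 => nat_dvd_auxP q h1 h2
  -- z is not periodic at any level
  have hfin : ∀ j, ∃ u v : ℤ, (p j : ℤ) ∣ v - u ∧ z u ≠ z v := by
    intro j
    by_contra hper
    push_neg at hper
    have hpj : (0 : ℤ) < (p j : ℤ) := by exact_mod_cast hp1 j
    have horb : {y : ℤ → X | ∃ m : ℤ, y = shiftZ m z} ⊆
        (fun m : ℤ => shiftZ m z) '' (Set.Icc 0 ((p j : ℤ) - 1)) := by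
      rintro y ⟨m, rfl⟩
      refine ⟨m % (p j : ℤ), ⟨Int.emod_nonneg _ (by omega),
        by have := Int.emod_lt_of_pos m hpj; omega⟩, ?_⟩
      funext n
      refine hper (n + m % (p j : ℤ)) (n + m) ?_
      refine ⟨m / (p j : ℤ), ?_⟩
      have := Int.emod_add_mul_ediv m (p j : ℤ)
      ring_nf
      linarith
    have h3 : {y : ℤ → X | ∃ m : ℤ, y = shiftZ m z}.Finite :=
      Set.Finite.subset ((Set.finite_Icc _ _).image _) horb
    have h4 : (orbitClosure z).Finite := by
      rw [orbitClosure, h3.isClosed.closure_eq]; exact h3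
    exact hinf h4
  by_cases hB : ∀ δ : ℝ, 0 < δ → ∃ J : ℕ, ∀ u v : ℤ, (p J : ℤ) ∣ v - u → dist (z u) (z v) < δ
  · -- Case B : almost periodic values; build a point with a permanent hole at 0
    choose a b hab hne using hfin
    obtain ⟨φ₁, hφ₁, s, hs⟩ := exists_subseq_residues p hp1 a
    obtain ⟨φ₂, hφ₂, y, hymem, hty⟩ := exists_subseq_shift z (fun k => a (φ₁ k))
    set Φ : ℕ → ℕ := φ₁ ∘ φ₂ with hΦ
    have hΦmono : StrictMono Φ := hφ₁.comp hφ₂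
    have hs' : ∀ j, ∀ᶠ k in atTop, (p j : ℤ) ∣ a (Φ k) - s j :=
      fun j => (hφ₂.tendsto_atTop).eventually (hs j)
    have hty' : Tendsto (fun k => shiftZ (a (Φ k)) z) atTop (𝓝 y) := hty
    have htoep : IsToeplitz y := hcon y hymem
    obtain ⟨Q0, hQ01, hQ0⟩ := htoep 0
    have hmain : ∀ j, Q0 ≤ j → ∀ w : ℤ, (p j : ℤ) ∣ w - s j → z w = y 0 := by
      intro j hj w hw
      refine eq_of_forall_dist_le fun δ hδ => ?_
      obtain ⟨J, hJ⟩ := hB δ hδ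
      set i := max j J with hi
      have hev : ∀ᶠ k in atTop,
          ((p i : ℤ) ∣ a (Φ k) - s i ∧ (p j : ℤ) ∣ a (Φ k) - s j) := (hs' i).and (hs' j)
      obtain ⟨N, hN⟩ := eventually_atTop.mp hev
      set t : ℤ := w - a (Φ N) with ht
      have hqt : ((Q0 : ℕ) : ℤ) ∣ t - 0 := by
        have h1 : (p j : ℤ) ∣ t := by
          have := dvd_sub hw (hN N le_rfl).2
          rwa [show w - s j - (a (Φ N) - s j) = t by rw [ht]; ring] at this
        have h2 : ((Q0 : ℕ) : ℤ) ∣ (p j : ℤ) := Int.natCast_dvd_natCast.mpr (hQd hQ01 hj)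
        simpa using h2.trans h1
      have hyt : y t = y 0 := hQ0 t hqt
      have hcoord : Tendsto (fun k => z (t + a (Φ k))) atTop (𝓝 (y t)) :=
        tendsto_pi_nhds.mp hty' t
      have hevd : ∀ᶠ k in atTop, dist (z w) (z (t + a (Φ k))) ≤ δ := by
        filter_upwards [eventually_ge_atTop N] with k hk
        have hdv : (p J : ℤ) ∣ (t + a (Φ k)) - w := by
          have h1 := (hN k hk).1
          have h2 := (hN N le_rfl).1
          have h3 : (p i : ℤ) ∣ a (Φ k) - a (Φ N) := by
            have := dvd_sub h1 h2
            rwa [show a (Φ k) - s i - (a (Φ N) - s i) = a (Φ k) - a (Φ N) by ring] at this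
          have hJi : (p J : ℤ) ∣ (p i : ℤ) :=
            Int.natCast_dvd_natCast.mpr (hpd (le_max_right j J))
          rw [show (t + a (Φ k)) - w = a (Φ k) - a (Φ N) by rw [ht]; ring]
          exact hJi.trans h3
        exact le_of_lt (hJ w (t + a (Φ k)) hdv)
      have hle : dist (z w) (y t) ≤ δ :=
        le_of_tendsto (Tendsto.dist tendsto_const_nhds hcoord) hevd
      rwa [hyt] at hle
    have hev2 : ∀ᶠ k in atTop, ((p Q0 : ℤ) ∣ a (Φ k) - s Q0 ∧ Q0 ≤ Φ k) :=
      (hs' Q0).and ((eventually_ge_atTop Q0).mono fun k hk => le_trans hk hΦmono.le_apply)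
    obtain ⟨k, hk1, hk2⟩ := hev2.exists
    have hw1 : z (a (Φ k)) = y 0 := hmain Q0 le_rfl _ hk1
    have hw2 : z (b (Φ k)) = y 0 := by
      refine hmain Q0 le_rfl _ ?_
      have hd1 : (p Q0 : ℤ) ∣ b (Φ k) - a (Φ k) :=
        (Int.natCast_dvd_natCast.mpr (hpd hk2)).trans (hab (Φ k))
      have := dvd_add hd1 hk1
      rwa [show b (Φ k) - a (Φ k) + (a (Φ k) - s Q0) = b (Φ k) - s Q0 by ring] at this
    exact hne (Φ k) (hw1.trans hw2.symm)
  · -- Case A : uniformly separated holes; build two distinct points with the same skeletons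
    push_neg at hB
    obtain ⟨δ, hδ, hA⟩ := hB
    choose a b hd hdist using hA
    obtain ⟨φ₁, hφ₁, s, hs⟩ := exists_subseq_residues p hp1 a
    obtain ⟨φ₂, hφ₂, y, hymem, hty⟩ := exists_subseq_shift z (fun k => a (φ₁ k))
    obtain ⟨φ₃, hφ₃, y', hymem', hty'⟩ := exists_subseq_shift z (fun k => b (φ₁ (φ₂ k)))
    set Φ : ℕ → ℕ := fun k => φ₁ (φ₂ (φ₃ k)) with hΦ
    have hΦmono : StrictMono Φ := hφ₁.comp (hφ₂.comp hφ₃)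
    have hty2 : Tendsto (fun k => shiftZ (a (Φ k)) z) atTop (𝓝 y) :=
      hty.comp hφ₃.tendsto_atTop
    have hty2' : Tendsto (fun k => shiftZ (b (Φ k)) z) atTop (𝓝 y') := hty'
    have hs' : ∀ j, ∀ᶠ k in atTop, (p j : ℤ) ∣ a (Φ k) - s j :=
      fun j => ((hφ₂.comp hφ₃).tendsto_atTop).eventually (hs j)
    have hsb : ∀ j, ∀ᶠ k in atTop, (p j : ℤ) ∣ b (Φ k) - s j := by
      intro j
      filter_upwards [hs' j, eventually_ge_atTop j] with k h1 h2
      have hjk : j ≤ Φ k := le_trans h2 hΦmono.le_apply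
      have hba : (p j : ℤ) ∣ b (Φ k) - a (Φ k) :=
        (Int.natCast_dvd_natCast.mpr (hpd hjk)).trans (hd (Φ k))
      have := dvd_add hba h1
      rwa [show b (Φ k) - a (Φ k) + (a (Φ k) - s j) = b (Φ k) - s j by ring] at this
    have hy : ∀ (j : ℕ) (n : ℤ), (n + s j) ∈ PerSet (p j) z → y n = z (n + s j) :=
      fun j n hn => skel (hs' j) hty2 hn
    have hy' : ∀ (j : ℕ) (n : ℤ), (n + s j) ∈ PerSet (p j) z → y' n = z (n + s j) :=
      fun j n hn => skel (hsb j) hty2' hn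
    have heq : y = y' :=
      rigid hwin hy hy' (hcon y hymem) (hcon y' hymem')
    have hc1 : Tendsto (fun k => z ((0 : ℤ) + a (Φ k))) atTop (𝓝 (y 0)) :=
      tendsto_pi_nhds.mp hty2 0
    have hc2 : Tendsto (fun k => z ((0 : ℤ) + b (Φ k))) atTop (𝓝 (y' 0)) :=
      tendsto_pi_nhds.mp hty2' 0
    have hdd : Tendsto (fun k => dist (z ((0 : ℤ) + a (Φ k))) (z ((0 : ℤ) + b (Φ k))))
        atTop (𝓝 (dist (y 0) (y' 0))) := hc1.dist hc2
    have hge : δ ≤ dist (y 0) (y' 0) := by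
      refine ge_of_tendsto hdd (Filter.Eventually.of_forall fun k => ?_)
      simpa [zero_add] using hdist (Φ k)
    rw [heq, dist_self] at hge
    linarith
end

section
/- Let X be a compact metric space and let (x_i) and (y_i) be sequences of points of X with the same topological type. Then there is a homeomorphism f from L((x_i)) onto L((y_i)) such that for every strictly increasing sequence (n_k) of natural numbers for which (x_{n_k}) converges, (y_{n_k}) converges to f(lim_k x_{n_k}). -/
open Filter Topology

section Aux

variable {X : Type*} [MetricSpace X]

lemma interleave_uniq (x y : ℕ → X) (h : SameTopType x y)
    {φ ψ : ℕ → ℕ} (hφ : StrictMono φ) (hψ : StrictMono ψ)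
    {a b b' : X} (hxφ : Tendsto (x ∘ φ) atTop (𝓝 a)) (hxψ : Tendsto (x ∘ ψ) atTop (𝓝 a))
    (hyφ : Tendsto (y ∘ φ) atTop (𝓝 b)) (hyψ : Tendsto (y ∘ ψ) atTop (𝓝 b')) : b = b' := by
  classical
  set i : ℕ → ℕ := fun k => Nat.rec 0 (fun _ prev => ψ (φ prev + 1) + 1) k with hi
  have hisucc : ∀ k, i (k + 1) = ψ (φ (i k) + 1) + 1 := fun k => rfl
  set j : ℕ → ℕ := fun k => φ (i k) + 1 with hj
  have himono : StrictMono i := by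
    apply strictMono_nat_of_lt_succ
    intro k
    have h1 : φ (i k) + 1 ≤ ψ (φ (i k) + 1) := hψ.le_apply
    have h2 : i k ≤ φ (i k) := hφ.le_apply
    rw [hisucc]; omega
  have hjmono : StrictMono j := fun p q hpq => by
    have := hφ (himono hpq); simp only [hj]; omega
  set χ : ℕ → ℕ := fun n => if n % 2 = 0 then φ (i (n / 2)) else ψ (j (n / 2)) with hχ
  have hχeven : ∀ k, χ (2 * k) = φ (i k) := by
    intro k
    have h1 : (2 * k) % 2 = 0 := by omega
    have h2 : (2 * k) / 2 = k := by omega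
    simp [hχ, h1, h2]
  have hχodd : ∀ k, χ (2 * k + 1) = ψ (j k) := by
    intro k
    have h1 : (2 * k + 1) % 2 = 1 := by omega
    have h2 : (2 * k + 1) / 2 = k := by omega
    simp [hχ, h1, h2]
  have hχmono : StrictMono χ := by
    apply strictMono_nat_of_lt_succ
    intro n
    rcases Nat.even_or_odd n with ⟨k, hk⟩ | ⟨k, hk⟩
    · have hn : n = 2 * k := by omega
      subst hn
      rw [hχeven, show 2 * k + 1 = 2 * k + 1 from rfl, hχodd]
      have h1 : j k ≤ ψ (j k) := hψ.le_apply
      simp only [hj] at h1 ⊢; omega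
    · subst hk
      rw [hχodd, show 2 * k + 1 + 1 = 2 * (k + 1) from by omega, hχeven]
      rw [hisucc]
      have h1 : ψ (φ (i k) + 1) + 1 ≤ φ (ψ (φ (i k) + 1) + 1) := hφ.le_apply
      simp only [hj]; omega
  have hxχ : Tendsto (x ∘ χ) atTop (𝓝 a) := by
    rw [Metric.tendsto_atTop] at hxφ hxψ ⊢
    intro ε hε
    obtain ⟨N1, h1⟩ := hxφ ε hε
    obtain ⟨N2, h2⟩ := hxψ ε hε
    refine ⟨2 * (N1 + N2), fun n hn => ?_⟩
    rcases Nat.even_or_odd n with ⟨k, hk⟩ | ⟨k, hk⟩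
    · have hn2 : n = 2 * k := by omega
      have hk1 : N1 ≤ k := by omega
      have : (x ∘ χ) n = (x ∘ φ) (i k) := by simp [hn2, Function.comp, hχeven]
      rw [this]
      exact h1 _ (le_trans hk1 (le_trans himono.le_apply le_rfl))
    · have hn2 : n = 2 * k + 1 := by omega
      have hk2 : N2 ≤ k := by omega
      have : (x ∘ χ) n = (x ∘ ψ) (j k) := by simp [hn2, Function.comp, hχodd]
      rw [this]
      exact h2 _ (le_trans hk2 hjmono.le_apply)
  obtain ⟨c, hc⟩ := (h χ hχmono).mp ⟨a, hxχ⟩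
  have hdouble : Tendsto (fun k : ℕ => 2 * k) atTop atTop :=
    tendsto_atTop_mono (fun k => by simp only [id_eq]; omega) tendsto_id
  have hdouble1 : Tendsto (fun k : ℕ => 2 * k + 1) atTop atTop :=
    tendsto_atTop_mono (fun k => by simp only [id_eq]; omega) tendsto_id
  have hbc : b = c := by
    have t1 : Tendsto (fun k => (y ∘ χ) (2 * k)) atTop (𝓝 c) := hc.comp hdouble
    have t1' : Tendsto (fun k => (y ∘ φ) (i k)) atTop (𝓝 c) := by
      have : (fun k => (y ∘ χ) (2 * k)) = fun k => (y ∘ φ) (i k) := by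
        funext k; simp [Function.comp, hχeven]
      rwa [this] at t1
    exact tendsto_nhds_unique (hyφ.comp himono.tendsto_atTop) t1'
  have hbc' : b' = c := by
    have t1 : Tendsto (fun k => (y ∘ χ) (2 * k + 1)) atTop (𝓝 c) := hc.comp hdouble1
    have t1' : Tendsto (fun k => (y ∘ ψ) (j k)) atTop (𝓝 c) := by
      have : (fun k => (y ∘ χ) (2 * k + 1)) = fun k => (y ∘ ψ) (j k) := by
        funext k; simp [Function.comp, hχodd]
      rwa [this] at t1
    exact tendsto_nhds_unique (hyψ.comp hjmono.tendsto_atTop) t1'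
  rw [hbc, hbc']

lemma exists_limit_map (x y : ℕ → X) (h : SameTopType x y) :
    ∃ F : X → X, ∀ φ : ℕ → ℕ, StrictMono φ → ∀ a : X,
      Tendsto (x ∘ φ) atTop (𝓝 a) → Tendsto (y ∘ φ) atTop (𝓝 (F a)) := by
  classical
  set S : X → Set X := fun a =>
    {b | ∃ φ : ℕ → ℕ, StrictMono φ ∧ Tendsto (x ∘ φ) atTop (𝓝 a) ∧
      Tendsto (y ∘ φ) atTop (𝓝 b)} with hS
  refine ⟨fun a => if hne : (S a).Nonempty then hne.choose else y 0, ?_⟩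
  intro φ hφ a hxφ
  obtain ⟨b, hb⟩ := (h φ hφ).mp ⟨a, hxφ⟩
  have hne : (S a).Nonempty := ⟨b, φ, hφ, hxφ, hb⟩
  obtain ⟨ψ, hψ, hxψ, hyψ⟩ := hne.choose_spec
  simp only [dif_pos hne]
  have := interleave_uniq x y h hφ hψ hxφ hxψ hb hyψ
  rwa [← this]

lemma seq_cont (x y : ℕ → X) (F : X → X)
    (hF : ∀ φ : ℕ → ℕ, StrictMono φ → ∀ a : X,
      Tendsto (x ∘ φ) atTop (𝓝 a) → Tendsto (y ∘ φ) atTop (𝓝 (F a)))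
    (u : ℕ → X) (hu : ∀ n, u n ∈ omegaLimitSet x) (a : X)
    (hua : Tendsto u atTop (𝓝 a)) :
    Tendsto (fun n => F (u n)) atTop (𝓝 (F a)) := by
  classical
  have claim : ∀ n N : ℕ, ∃ m : ℕ, N < m ∧ dist (x m) (u n) < 1 / (n + 1 : ℝ) ∧
      dist (y m) (F (u n)) < 1 / (n + 1 : ℝ) := by
    intro n N
    obtain ⟨φ, hφ, hxφ⟩ := hu n
    have hyφ := hF φ hφ _ hxφ
    have hε : (0 : ℝ) < 1 / (n + 1 : ℝ) := by positivity
    obtain ⟨N1, h1⟩ := Metric.tendsto_atTop.mp hxφ _ hε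
    obtain ⟨N2, h2⟩ := Metric.tendsto_atTop.mp hyφ _ hε
    refine ⟨φ (N1 + N2 + N + 1), ?_, h1 _ (by omega), h2 _ (by omega)⟩
    calc N < N1 + N2 + N + 1 := by omega
    _ ≤ φ (N1 + N2 + N + 1) := hφ.le_apply
  set m : ℕ → ℕ := fun n => Nat.rec (claim 0 0).choose
    (fun n prev => (claim (n + 1) prev).choose) n with hm
  have hm0eq : m 0 = (claim 0 0).choose := rfl
  have hmsucc : ∀ n, m (n + 1) = (claim (n + 1) (m n)).choose := fun n => rfl
  have hmmono : StrictMono m := by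
    apply strictMono_nat_of_lt_succ
    intro n
    rw [hmsucc]
    exact (claim (n + 1) (m n)).choose_spec.1
  have hmd : ∀ n, dist (x (m n)) (u n) < 1 / (n + 1 : ℝ) ∧
      dist (y (m n)) (F (u n)) < 1 / (n + 1 : ℝ) := by
    intro n
    cases n with
    | zero => rw [hm0eq]; exact ⟨(claim 0 0).choose_spec.2.1, (claim 0 0).choose_spec.2.2⟩
    | succ k =>
      rw [hmsucc]
      exact ⟨(claim (k + 1) (m k)).choose_spec.2.1, (claim (k + 1) (m k)).choose_spec.2.2⟩
  have hinv : Tendsto (fun n : ℕ => 1 / (n + 1 : ℝ)) atTop (𝓝 0) :=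
    tendsto_one_div_add_atTop_nhds_zero_nat
  have hxm : Tendsto (x ∘ m) atTop (𝓝 a) := by
    rw [tendsto_iff_dist_tendsto_zero]
    have hle : ∀ n, dist ((x ∘ m) n) a ≤ 1 / (n + 1 : ℝ) + dist (u n) a := fun n =>
      le_trans (dist_triangle _ (u n) a) (by
        have := (hmd n).1; simp only [Function.comp]; linarith)
    have hg : Tendsto (fun n : ℕ => 1 / (n + 1 : ℝ) + dist (u n) a) atTop (𝓝 0) := by
      have := hinv.add (tendsto_iff_dist_tendsto_zero.mp hua)
      simpa using this
    exact squeeze_zero (fun n => dist_nonneg) hle hg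
  have hym : Tendsto (y ∘ m) atTop (𝓝 (F a)) := hF m hmmono a hxm
  rw [tendsto_iff_dist_tendsto_zero]
  have hle : ∀ n, dist (F (u n)) (F a) ≤ 1 / (n + 1 : ℝ) + dist (y (m n)) (F a) := fun n =>
    le_trans (dist_triangle _ (y (m n)) (F a)) (by
      have := (hmd n).2; rw [dist_comm] at this; linarith)
  have hg : Tendsto (fun n : ℕ => 1 / (n + 1 : ℝ) + dist (y (m n)) (F a)) atTop (𝓝 0) := by
    have := hinv.add (tendsto_iff_dist_tendsto_zero.mp hym)
    simpa [Function.comp] using this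
  exact squeeze_zero (fun n => dist_nonneg) hle hg

end Aux

/-- Fact `TT implies homeo`: if `(x_i)` and `(y_i)` have the same
topological type, there is a homeomorphism of ω-limit sets sending
`lim_k x_{n_k}` to `lim_k y_{n_k}` for every convergent subsequence. -/
theorem sameTopType_implies_homeo {X : Type*} [MetricSpace X] [CompactSpace X]
    (x y : ℕ → X) (h : SameTopType x y) :
    ∃ f : ↥(omegaLimitSet x) ≃ₜ ↥(omegaLimitSet y),
      ∀ φ : ℕ → ℕ, StrictMono φ → ∀ l : ↥(omegaLimitSet x),
        Tendsto (x ∘ φ) atTop (𝓝 l.1) → Tendsto (y ∘ φ) atTop (𝓝 (f l).1) := by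
  classical
  have hsymm : SameTopType y x := fun φ hφ => (h φ hφ).symm
  obtain ⟨F, hF⟩ := exists_limit_map x y h
  obtain ⟨G, hG⟩ := exists_limit_map y x hsymm
  have hFA : ∀ a ∈ omegaLimitSet x, F a ∈ omegaLimitSet y := by
    rintro a ⟨φ, hφ, hxφ⟩; exact ⟨φ, hφ, hF φ hφ a hxφ⟩
  have hGB : ∀ b ∈ omegaLimitSet y, G b ∈ omegaLimitSet x := by
    rintro b ⟨φ, hφ, hyφ⟩; exact ⟨φ, hφ, hG φ hφ b hyφ⟩
  have hGF : ∀ a ∈ omegaLimitSet x, G (F a) = a := by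
    rintro a ⟨φ, hφ, hxφ⟩
    exact tendsto_nhds_unique (hG φ hφ _ (hF φ hφ a hxφ)) hxφ
  have hFG : ∀ b ∈ omegaLimitSet y, F (G b) = b := by
    rintro b ⟨φ, hφ, hyφ⟩
    exact tendsto_nhds_unique (hF φ hφ _ (hG φ hφ b hyφ)) hyφ
  have hcF : Continuous (fun a : ↥(omegaLimitSet x) => F a.1) := by
    apply SeqContinuous.continuous
    intro u p hup
    have hval : Tendsto (fun n => (u n).1) atTop (𝓝 p.1) :=
      (continuous_subtype_val.tendsto p).comp hup
    exact seq_cont x y F hF (fun n => (u n).1) (fun n => (u n).2) p.1 hval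
  have hcG : Continuous (fun b : ↥(omegaLimitSet y) => G b.1) := by
    apply SeqContinuous.continuous
    intro u p hup
    have hval : Tendsto (fun n => (u n).1) atTop (𝓝 p.1) :=
      (continuous_subtype_val.tendsto p).comp hup
    exact seq_cont y x G hG (fun n => (u n).1) (fun n => (u n).2) p.1 hval
  refine ⟨{ toFun := fun a => ⟨F a.1, hFA a.1 a.2⟩
            invFun := fun b => ⟨G b.1, hGB b.1 b.2⟩
            left_inv := fun a => Subtype.ext (hGF a.1 a.2)
            right_inv := fun b => Subtype.ext (hFG b.1 b.2)
            continuous_toFun := hcF.subtype_mk _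
            continuous_invFun := hcG.subtype_mk _ }, ?_⟩
  intro φ hφ l hl
  exact hF φ hφ l.1 hl
end

section
/- Let (X,f,x) and (Y,g,y) be pointed minimal compact systems. The following are equivalent: (1) (X,f,x) and (Y,g,y) are conjugate; (2) for every sequence of integers (n_k), the sequence (f^{n_k}(x)) converges if and only if (g^{n_k}(y)) converges; (3) the sequences (f^n(x))_{n∈ℕ} and (g^n(y))_{n∈ℕ} have the same topological type and there exists a strictly increasing sequence (m_k) of natural numbers such that f^{m_k}(x) → x and g^{m_k}(y) → y. -/
open Filter Topology

/-!
(1) ⇒ (2) and (1) ⇒ (3): a conjugacy transports convergence, and the return times in (3)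
exist because every point of a minimal compact system is recurrent.

(2) ⇒ (1): interleaving two integer sequences along which `f^n x` has the same limit shows
that (2) makes the closure of `{(f^n x, g^n y) : n ∈ ℤ}` in `X × Y` the graph of a bijection.
Density of both orbits makes the projections onto, so by compactness it is the graph of a
homeomorphism, and its invariance under `f × g` makes that homeomorphism a conjugacy.

(3) ⇒ (2): common return times make every `(f^n x, g^n y)`, `n ∈ ℤ`, a cluster point of the
forward orbit of `(x, y)`. Hence any integer sequence is shadowed in both systems by a strictly
increasing sequence of natural numbers, to which the equality of topological types applies.
-/

open Set

section Iterates

variable {X Y : Type*} [TopologicalSpace X] [TopologicalSpace Y]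

theorem iterZ_eq_coe_zpow (f : X ≃ₜ X) (n : ℤ) : iterZ f n = ⇑(f ^ n) := by
  have := map_zpow (MonoidHom.mk' (fun f : X ≃ₜ X => f.toEquiv) fun _ _ => rfl) f n
  funext a
  exact congrArg (· a) this.symm

theorem continuous_iterZ (f : X ≃ₜ X) (n : ℤ) : Continuous (iterZ f n) := by
  rw [iterZ_eq_coe_zpow]
  exact (f ^ n).continuous

theorem iterZ_zero (f : X ≃ₜ X) (a : X) : iterZ f 0 a = a := by
  simp [iterZ_eq_coe_zpow]

theorem iterZ_add (f : X ≃ₜ X) (m n : ℤ) (a : X) :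
    iterZ f (m + n) a = iterZ f m (iterZ f n a) := by
  simp [iterZ_eq_coe_zpow, zpow_add]

theorem iterZ_one_add (f : X ≃ₜ X) (n : ℤ) (a : X) : iterZ f (1 + n) a = f (iterZ f n a) := by
  simp [iterZ_add, iterZ_eq_coe_zpow]

theorem iterZ_prodCongr (f : X ≃ₜ X) (g : Y ≃ₜ Y) (n : ℤ) (a : X) (b : Y) :
    iterZ (f.prodCongr g) n (a, b) = (iterZ f n a, iterZ g n b) := by
  have := map_zpow (MonoidHom.mk' (fun p : (X ≃ₜ X) × (Y ≃ₜ Y) => p.1.prodCongr p.2)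
    fun _ _ => rfl) (f, g) n
  simp only [iterZ_eq_coe_zpow]
  rw [← show _ = (f.prodCongr g) ^ n from this]
  rfl

theorem Homeomorph.apply_iterZ_of_semiconj (h : X ≃ₜ Y) {f : X ≃ₜ X} {g : Y ≃ₜ Y}
    (hc : ∀ a, h (f a) = g (h a)) (n : ℤ) (a : X) : h (iterZ f n a) = iterZ g n (h a) := by
  have hperm : h.toEquiv.permCongr f.toEquiv = g.toEquiv :=
    Equiv.ext fun b => by simp [Equiv.permCongr_apply, hc]
  have := congrArg (· (h a)) (map_zpow h.toEquiv.permCongrHom f.toEquiv n)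
  simp only [Equiv.permCongrHom_coe, Equiv.permCongr_apply, hperm] at this
  simpa [iterZ] using this

end Iterates

section ClosureOfGraph

variable {ι X Y : Type*} [TopologicalSpace X] [TopologicalSpace Y]

theorem exists_mem_closure_range_prod [CompactSpace Y] {s : ι → X} (hs : DenseRange s)
    (t : ι → Y) (a : X) : ∃ b, (a, b) ∈ closure (range fun i => (s i, t i)) := by
  have hclosed : IsClosed (Prod.fst '' closure (range fun i => (s i, t i))) :=
    isClosedMap_fst_of_compactSpace _ isClosed_closure
  have hrange : range s ⊆ Prod.fst '' closure (range fun i => (s i, t i)) := by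
    rintro _ ⟨i, rfl⟩
    exact ⟨_, subset_closure ⟨i, rfl⟩, rfl⟩
  obtain ⟨p, hp, rfl⟩ := closure_minimal hrange hclosed (hs a)
  exact ⟨p.2, hp⟩

theorem mem_closure_range_prod_swap {s : ι → X} {t : ι → Y} {a : X} {b : Y} :
    (b, a) ∈ closure (range fun i => (t i, s i)) ↔
      (a, b) ∈ closure (range fun i => (s i, t i)) := by
  have hswap : (range fun i => (t i, s i)) = Prod.swap ⁻¹' range fun i => (s i, t i) := by
    ext ⟨b', a'⟩
    simp [and_comm]
  rw [hswap]
  exact (Set.ext_iff.1 ((Homeomorph.prodComm Y X).preimage_closure _) (b, a)).symm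

theorem snd_eq_of_mem_closure_range_prod [FirstCountableTopology X] [FirstCountableTopology Y]
    [T2Space Y] {s : ι → X} {t : ι → Y}
    (hst : ∀ n : ℕ → ι, (∃ a, Tendsto (fun k => s (n k)) atTop (𝓝 a)) →
      ∃ b, Tendsto (fun k => t (n k)) atTop (𝓝 b))
    {a : X} {b b' : Y} (hb : (a, b) ∈ closure (range fun i => (s i, t i)))
    (hb' : (a, b') ∈ closure (range fun i => (s i, t i))) : b = b' := by
  have exists_seq : ∀ {p : X × Y}, p ∈ closure (range fun i => (s i, t i)) →
      ∃ u : ℕ → ι, Tendsto (fun k => (s (u k), t (u k))) atTop (𝓝 p) := fun hp => by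
    obtain ⟨q, hq, hlim⟩ := mem_closure_iff_seq_limit.1 hp
    choose u hu using hq
    exact ⟨u, by simpa only [hu] using hlim⟩
  obtain ⟨u, hu⟩ := exists_seq hb
  obtain ⟨v, hv⟩ := exists_seq hb'
  let w : ℕ → ι := fun k => if Even k then u k else v k
  have hw : Tendsto (fun k => s (w k)) atTop (𝓝 a) := by
    simp only [w, apply_ite s]
    exact (hu.fst_nhds.mono_left inf_le_left).if (hv.fst_nhds.mono_left inf_le_left)
  obtain ⟨c, hc⟩ := hst w ⟨a, hw⟩
  have hevenw : ∃ᶠ k in atTop, t (u k) = t (w k) :=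
    frequently_atTop.2 fun N => ⟨2 * N, by omega, by simp [w]⟩
  have hoddw : ∃ᶠ k in atTop, t (v k) = t (w k) :=
    frequently_atTop.2 fun N => ⟨2 * N + 1, by omega, by simp [w]⟩
  exact (tendsto_nhds_unique_of_frequently_eq hu.snd_nhds hc hevenw).trans
    (tendsto_nhds_unique_of_frequently_eq hv.snd_nhds hc hoddw).symm

end ClosureOfGraph

theorem exists_homeomorph_forall_mem_of_isClosed {X Y : Type*} [TopologicalSpace X]
    [CompactSpace X] [T2Space X] [TopologicalSpace Y] [CompactSpace Y] [T2Space Y]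
    {G : Set (X × Y)} (hG : IsClosed G) (hX : ∀ a, ∃! b, (a, b) ∈ G)
    (hY : ∀ b, ∃! a, (a, b) ∈ G) : ∃ h : X ≃ₜ Y, ∀ a, (a, h a) ∈ G := by
  have : CompactSpace G := isCompact_iff_compactSpace.1 hG.isCompact
  have inj₁ : Function.Injective fun p : G => p.1.1 := fun p q (hpq : p.1.1 = q.1.1) =>
    Subtype.ext (Prod.ext hpq ((hX _).unique p.2 (by rw [hpq]; exact q.2)))
  have inj₂ : Function.Injective fun p : G => p.1.2 := fun p q (hpq : p.1.2 = q.1.2) =>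
    Subtype.ext (Prod.ext ((hY _).unique p.2 (by rw [hpq]; exact q.2)) hpq)
  let e₁ : G ≃ₜ X := Continuous.homeoOfEquivCompactToT2
    (f := Equiv.ofBijective _ ⟨inj₁, fun a => ⟨⟨_, (hX a).exists.choose_spec⟩, rfl⟩⟩)
    (continuous_fst.comp continuous_subtype_val)
  let e₂ : G ≃ₜ Y := Continuous.homeoOfEquivCompactToT2
    (f := Equiv.ofBijective _ ⟨inj₂, fun b => ⟨⟨_, (hY b).exists.choose_spec⟩, rfl⟩⟩)
    (continuous_snd.comp continuous_subtype_val)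
  refine ⟨e₁.symm.trans e₂, fun a => ?_⟩
  have hfst : (e₁.symm a : X × Y).1 = a := e₁.apply_symm_apply a
  have hpair : (a, (e₁.symm.trans e₂) a) = (e₁.symm a : X × Y) := Prod.ext hfst.symm rfl
  exact hpair ▸ (e₁.symm a).2

section PointedSystems

variable {X Y : Type*} [TopologicalSpace X] [TopologicalSpace Y] {f : X ≃ₜ X} {g : Y ≃ₜ Y}
  {x : X} {y : Y}

theorem exists_tendsto_iterZ_iff_of_conj (h : X ≃ₜ Y) (hc : ∀ a, h (f a) = g (h a))
    (hxy : h x = y) (n : ℕ → ℤ) :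
    (∃ l, Tendsto (fun k => iterZ f (n k) x) atTop (𝓝 l)) ↔
      ∃ l, Tendsto (fun k => iterZ g (n k) y) atTop (𝓝 l) := by
  simp only [← hxy, ← h.apply_iterZ_of_semiconj hc]
  exact (h.surjective.exists.trans (exists_congr fun l => h.isInducing.tendsto_nhds_iff.symm)).symm

theorem map_mem_closure_range_iterZ_prod {p : X × Y}
    (hp : p ∈ closure (range fun n : ℤ => (iterZ f n x, iterZ g n y))) :
    (f p.1, g p.2) ∈ closure (range fun n : ℤ => (iterZ f n x, iterZ g n y)) :=
  map_mem_closure (f := Prod.map f g) (f.continuous.prodMap g.continuous) hp <| by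
    rintro _ ⟨n, rfl⟩
    exact ⟨1 + n, by simp [iterZ_one_add]⟩

theorem exists_conj_of_forall_exists_tendsto_iff [CompactSpace X] [T2Space X]
    [FirstCountableTopology X] [CompactSpace Y] [T2Space Y] [FirstCountableTopology Y]
    (hx : DenseRange fun n : ℤ => iterZ f n x) (hy : DenseRange fun n : ℤ => iterZ g n y)
    (H : ∀ n : ℕ → ℤ, (∃ l, Tendsto (fun k => iterZ f (n k) x) atTop (𝓝 l)) ↔
      ∃ l, Tendsto (fun k => iterZ g (n k) y) atTop (𝓝 l)) :
    ∃ h : X ≃ₜ Y, (∀ a, h (f a) = g (h a)) ∧ h x = y := by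
  set G := closure (range fun n : ℤ => (iterZ f n x, iterZ g n y))
  have hX : ∀ a, ∃! b, (a, b) ∈ G := fun a => by
    obtain ⟨b, hb⟩ := exists_mem_closure_range_prod hx (fun n => iterZ g n y) a
    exact ⟨b, hb, fun b' hb' => snd_eq_of_mem_closure_range_prod (fun n => (H n).1) hb' hb⟩
  have hY : ∀ b, ∃! a, (a, b) ∈ G := fun b => by
    obtain ⟨a, ha⟩ := exists_mem_closure_range_prod hy (fun n => iterZ f n x) b
    refine ⟨a, mem_closure_range_prod_swap.1 ha, fun a' ha' => ?_⟩
    exact snd_eq_of_mem_closure_range_prod (fun n => (H n).2)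
      (mem_closure_range_prod_swap.2 ha') ha
  obtain ⟨h, hh⟩ := exists_homeomorph_forall_mem_of_isClosed isClosed_closure hX hY
  have hxy : (x, y) ∈ G := subset_closure ⟨0, by simp [iterZ_zero]⟩
  exact ⟨h, fun a => (hX (f a)).unique (hh (f a)) (map_mem_closure_range_iterZ_prod (hh a)),
    (hX x).unique (hh x) hxy⟩

theorem mapClusterPt_iterZ_self [CompactSpace X]
    (hf : ∀ a : X, Dense (range fun n : ℤ => iterZ f n a)) (x : X) :
    MapClusterPt x atTop fun n : ℕ => iterZ f n x := by
  refine mapClusterPt_iff_frequently.2 fun s hs => ?_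
  obtain ⟨U, hUs, hU, hxU⟩ := mem_nhds_iff.1 hs
  have hcover : univ ⊆ ⋃ n : ℤ, iterZ f n ⁻¹' U := fun a _ => by
    obtain ⟨_, ⟨n, rfl⟩, hn⟩ := (hf a).exists_mem_open hU ⟨x, hxU⟩
    exact mem_iUnion.2 ⟨n, hn⟩
  obtain ⟨T, hT⟩ := isCompact_univ.elim_finite_subcover _
    (fun n => hU.preimage (continuous_iterZ f n)) hcover
  -- every orbit segment of length `2M + 1` meets `U`, where `M` bounds `|n|` on `T`
  set M := T.sup Int.natAbs
  refine frequently_atTop.2 fun N => ?_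
  obtain ⟨n, hnT, hn⟩ := mem_iUnion₂.1 (hT (mem_univ (iterZ f (N + M) x)))
  have hnM : n.natAbs ≤ M := T.le_sup (f := Int.natAbs) hnT
  refine ⟨(n + (N + M)).toNat, by omega, hUs ?_⟩
  rw [Int.toNat_of_nonneg (by omega), iterZ_add]
  exact hn

theorem mapClusterPt_iterZ_of_mapClusterPt
    (hx : MapClusterPt x atTop fun t : ℕ => iterZ f t x) (n : ℤ) :
    MapClusterPt (iterZ f n x) atTop fun t : ℕ => iterZ f t x := by
  have hZ : ∀ z, MapClusterPt z atTop (fun t : ℕ => iterZ f t x) ↔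
      MapClusterPt z atTop fun t : ℤ => iterZ f t x := fun z => by
    rw [MapClusterPt, MapClusterPt, ← Nat.map_cast_int_atTop, map_map]
    rfl
  have hshift : iterZ f n ∘ (fun t : ℤ => iterZ f t x) = (fun t => iterZ f t x) ∘ (n + ·) :=
    funext fun t => (iterZ_add f n t x).symm
  refine (hZ _).2 (MapClusterPt.of_comp (tendsto_atTop_add_const_left _ n tendsto_id) ?_)
  exact hshift ▸ ((hZ x).1 hx).continuousAt_comp (continuous_iterZ f n).continuousAt

end PointedSystems

theorem exists_strictMono_tendsto_dist_zero {Z : Type*} [PseudoMetricSpace Z] {u v : ℕ → Z}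
    (h : ∀ k, MapClusterPt (v k) atTop u) :
    ∃ c : ℕ → ℕ, StrictMono c ∧
      Tendsto (fun k => dist (u (c k)) (v k)) atTop (𝓝 0) := by
  have hfreq : ∀ k : ℕ, ∃ᶠ j in atTop, dist (u j) (v k) < 1 / (k + 1) := fun k =>
    mapClusterPt_iff_frequently.1 (h k) _ (Metric.ball_mem_nhds _ (by positivity))
  obtain ⟨c, hc, hcv⟩ := extraction_forall_of_frequently hfreq
  exact ⟨c, hc, squeeze_zero (fun _ => dist_nonneg) (fun k => (hcv k).le)
    tendsto_one_div_add_atTop_nhds_zero_nat⟩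

theorem exists_tendsto_of_sameTopType {X Y : Type*} [PseudoMetricSpace X] [PseudoMetricSpace Y]
    {f : X ≃ₜ X} {g : Y ≃ₜ Y} {x : X} {y : Y}
    (hST : SameTopType (fun n : ℕ => iterZ f n x) (fun n : ℕ => iterZ g n y))
    {m : ℕ → ℕ} (hm : StrictMono m) (hmx : Tendsto (fun k => iterZ f (m k) x) atTop (𝓝 x))
    (hmy : Tendsto (fun k => iterZ g (m k) y) atTop (𝓝 y)) {n : ℕ → ℤ}
    (hn : ∃ l, Tendsto (fun k => iterZ f (n k) x) atTop (𝓝 l)) :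
    ∃ l, Tendsto (fun k => iterZ g (n k) y) atTop (𝓝 l) := by
  set F := f.prodCongr g
  have hrec : MapClusterPt (x, y) atTop fun t : ℕ => iterZ F t (x, y) := by
    refine MapClusterPt.of_comp hm.tendsto_atTop (Tendsto.mapClusterPt ?_)
    simpa only [Function.comp_def, F, iterZ_prodCongr] using hmx.prodMk_nhds hmy
  obtain ⟨c, hc, hdist⟩ :=
    exists_strictMono_tendsto_dist_zero (v := fun k => iterZ F (n k) (x, y))
    fun k => mapClusterPt_iterZ_of_mapClusterPt hrec (n k)
  simp only [F, iterZ_prodCongr, Prod.dist_eq] at hdist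
  obtain ⟨l, hl⟩ := hn
  have hfc : Tendsto (fun k => iterZ f (c k) x) atTop (𝓝 l) := hl.congr_dist <|
    squeeze_zero (fun _ => dist_nonneg) (fun k => (dist_comm _ _).trans_le (le_max_left _ _)) hdist
  obtain ⟨l', hl'⟩ := (hST c hc).1 ⟨l, hfc⟩
  exact ⟨l', hl'.congr_dist <|
    squeeze_zero (fun _ => dist_nonneg) (fun k => le_max_right _ _) hdist⟩

/-- Lemma `min`: for pointed minimal compact systems `(X,f,x)` and
`(Y,g,y)`, conjugacy is equivalent to (2) same convergence of `(f^{n_k} x)` and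
`(g^{n_k} y)` for all integer sequences, and to (3) same topological type of the forward
orbits plus a common return-time sequence. -/
theorem pointed_min_conjugacy_iff {X Y : Type*}
    [MetricSpace X] [CompactSpace X] [MetricSpace Y] [CompactSpace Y]
    (f : X ≃ₜ X) (g : Y ≃ₜ Y)
    (hf : ∀ a : X, Dense (Set.range fun n : ℤ => iterZ f n a))
    (hg : ∀ b : Y, Dense (Set.range fun n : ℤ => iterZ g n b))
    (x : X) (y : Y) :
    ((∃ h : X ≃ₜ Y, (∀ a : X, h (f a) = g (h a)) ∧ h x = y) ↔
      (∀ n : ℕ → ℤ,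
        (∃ l, Tendsto (fun k => iterZ f (n k) x) atTop (𝓝 l)) ↔
          (∃ l, Tendsto (fun k => iterZ g (n k) y) atTop (𝓝 l)))) ∧
    ((∃ h : X ≃ₜ Y, (∀ a : X, h (f a) = g (h a)) ∧ h x = y) ↔
      (SameTopType (fun n : ℕ => iterZ f (n : ℤ) x) (fun n : ℕ => iterZ g (n : ℤ) y) ∧
        ∃ m : ℕ → ℕ, StrictMono m ∧
          Tendsto (fun k => iterZ f (m k : ℤ) x) atTop (𝓝 x) ∧
          Tendsto (fun k => iterZ g (m k : ℤ) y) atTop (𝓝 y))) := by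
  have conj_iff_convergence : (∃ h : X ≃ₜ Y, (∀ a : X, h (f a) = g (h a)) ∧ h x = y) ↔
      ∀ n : ℕ → ℤ, (∃ l, Tendsto (fun k => iterZ f (n k) x) atTop (𝓝 l)) ↔
        ∃ l, Tendsto (fun k => iterZ g (n k) y) atTop (𝓝 l) :=
    ⟨fun ⟨h, hc, hxy⟩ => exists_tendsto_iterZ_iff_of_conj h hc hxy,
      exists_conj_of_forall_exists_tendsto_iff (hf x) (hg y)⟩
  refine ⟨conj_iff_convergence, ?_, fun ⟨hST, m, hm, hmx, hmy⟩ =>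
    conj_iff_convergence.2 fun n => ⟨exists_tendsto_of_sameTopType hST hm hmx hmy,
      exists_tendsto_of_sameTopType (fun φ hφ => (hST φ hφ).symm) hm hmy hmx⟩⟩
  rintro ⟨h, hc, hxy⟩
  obtain ⟨m, hm, hmx⟩ := (mapClusterPt_iterZ_self hf x).tendsto_subseq
  refine ⟨fun φ _ => exists_tendsto_iterZ_iff_of_conj h hc hxy (fun k => φ k), m, hm, hmx, ?_⟩
  simpa only [Function.comp_def, hxy, h.apply_iterZ_of_semiconj hc] using
    (h.continuous.tendsto x).comp hmx
end

section
/- Let (X,f,x) and (Y,g,y) be pointed minimal compact systems. Then (X,f,x) and (Y,g,y) are conjugate if and only if the interleaved sequences (x, f(x), x, f²(x), x, f³(x), …) and (y, g(y), y, g²(y), y, g³(y), …) have the same topological type (i.e. the sequences (a_n) and (b_n) with a_{2k} = x, a_{2k+1} = f^{k+1}(x), b_{2k} = y, b_{2k+1} = g^{k+1}(y) have the same topological type). -/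
open Filter Topology

/-!
Let `u_k = f^(k+1) x`, `v_k = g^(k+1) y` and let `R ⊆ X × Y` be the ω-limit set of `(u_k, v_k)`,
the set of joint limits of its subsequences. It is closed and `f × g`-invariant, and by minimality
and compactness it projects onto `X` and onto `Y`. If `(u_k)` and `(v_k)` have the same
topological type, `R` is the graph of a bijection: two subsequences of `(u_k)` with a common limit
merge into one convergent subsequence, so the corresponding subsequences of `(v_k)` have a common
limit too. A closed graph between compact spaces is a homeomorphism, and invariance makes it a
conjugacy. The constant terms of the interleaved sequences pin down the base points: merging the
even indices with odd indices along which `u_k → x` forces `v_k → y` along the latter.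
-/

open Set

theorem strictMono_two_mul : StrictMono fun k : ℕ => 2 * k :=
  fun _ _ h => by dsimp only; omega

theorem strictMono_two_mul_add_one : StrictMono fun k : ℕ => 2 * k + 1 :=
  fun _ _ h => by dsimp only; omega

section Interleave

variable {α : Type*}

def interleave (u v : ℕ → α) (n : ℕ) : α := if n % 2 = 0 then u (n / 2) else v (n / 2)

variable {u v : ℕ → α}

@[simp]
theorem interleave_two_mul (k : ℕ) : interleave u v (2 * k) = u k := by
  simp [interleave]

@[simp]
theorem interleave_two_mul_add_one (k : ℕ) : interleave u v (2 * k + 1) = v k := by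
  simp [interleave, Nat.add_mod, Nat.add_div]

theorem interleave_comp_two_mul : interleave u v ∘ (2 * ·) = u :=
  funext interleave_two_mul

theorem interleave_comp_two_mul_add_one : interleave u v ∘ (2 * · + 1) = v :=
  funext interleave_two_mul_add_one

theorem comp_interleave {β : Type*} (g : α → β) :
    g ∘ interleave u v = interleave (g ∘ u) (g ∘ v) := by
  funext n
  simp only [Function.comp_apply, interleave, apply_ite g]

theorem strictMono_interleave [Preorder α] (huv : ∀ k, u k < v k) (hvu : ∀ k, v k < u (k + 1)) :
    StrictMono (interleave u v) := by
  refine strictMono_nat_of_lt_succ fun n => ?_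
  obtain ⟨k, rfl | rfl⟩ := Nat.even_or_odd' n
  · simpa using huv k
  · simpa [show 2 * k + 1 + 1 = 2 * (k + 1) by ring] using hvu k

variable {l : Filter α}

theorem tendsto_interleave (hu : Tendsto u atTop l) (hv : Tendsto v atTop l) :
    Tendsto (interleave u v) atTop l := by
  have hdiv := Nat.tendsto_div_const_atTop two_ne_zero
  exact ((hu.comp hdiv).mono_left inf_le_left).if ((hv.comp hdiv).mono_left inf_le_left)

theorem Filter.Tendsto.of_interleave_left (h : Tendsto (interleave u v) atTop l) :
    Tendsto u atTop l := by
  simpa only [interleave_comp_two_mul] using h.comp strictMono_two_mul.tendsto_atTop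

theorem Filter.Tendsto.of_interleave_right (h : Tendsto (interleave u v) atTop l) :
    Tendsto v atTop l := by
  simpa only [interleave_comp_two_mul_add_one] using
    h.comp strictMono_two_mul_add_one.tendsto_atTop

end Interleave

theorem exists_strictMono_interleave_comp {φ ψ : ℕ → ℕ} (hφ : StrictMono φ) (hψ : StrictMono ψ) :
    ∃ α β : ℕ → ℕ, StrictMono α ∧ StrictMono β ∧ StrictMono (interleave (φ ∘ α) (ψ ∘ β)) := by
  let c : ℕ → ℕ := fun n => Nat.rec 0 (fun _ m => max (φ m) (ψ m) + 1) n
  have hc : ∀ n, max (φ (c n)) (ψ (c n)) < c (n + 1) := fun n => Nat.lt_succ_self _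
  have hφc : ∀ n, φ (c n) < ψ (c (n + 1)) := fun n =>
    (le_max_left _ _).trans_lt ((hc n).trans_le (hψ.id_le _))
  have hψc : ∀ n, ψ (c n) < φ (c (n + 1)) := fun n =>
    (le_max_right _ _).trans_lt ((hc n).trans_le (hφ.id_le _))
  have hcmono : StrictMono c := strictMono_nat_of_lt_succ fun n =>
    (hφ.id_le _).trans_lt ((le_max_left _ _).trans_lt (hc n))
  refine ⟨c ∘ (2 * ·), c ∘ (2 * · + 1), hcmono.comp strictMono_two_mul,
    hcmono.comp strictMono_two_mul_add_one, strictMono_interleave (fun k => hφc _) fun k => ?_⟩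
  simpa [show 2 * (k + 1) = 2 * k + 1 + 1 by ring] using hψc (2 * k + 1)

section OmegaLimit

variable {X Y : Type*} [TopologicalSpace X] [TopologicalSpace Y]

theorem omegaLimitSet_comp_subset {w : ℕ → X} {φ : ℕ → ℕ} (hφ : StrictMono φ) :
    omegaLimitSet (w ∘ φ) ⊆ omegaLimitSet w :=
  fun _ ⟨ψ, hψ, h⟩ => ⟨φ ∘ ψ, hφ.comp hψ, h⟩

theorem mem_omegaLimitSet_comp_homeomorph (F : X ≃ₜ Y) {w : ℕ → X} {a : X} :
    F a ∈ omegaLimitSet (F ∘ w) ↔ a ∈ omegaLimitSet w := by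
  refine ⟨fun ⟨φ, hφ, h⟩ => ⟨φ, hφ, ?_⟩, fun ⟨φ, hφ, h⟩ => ⟨φ, hφ, (F.continuous.tendsto a).comp h⟩⟩
  simpa [Function.comp_def] using (F.symm.continuous.tendsto _).comp h

theorem mem_omegaLimitSet_prodMk_iff {s : ℕ → X} {t : ℕ → Y} {a : X} {b : Y} :
    (a, b) ∈ omegaLimitSet (fun k => (s k, t k)) ↔
      ∃ φ : ℕ → ℕ, StrictMono φ ∧ Tendsto (s ∘ φ) atTop (𝓝 a) ∧ Tendsto (t ∘ φ) atTop (𝓝 b) := by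
  simp only [omegaLimitSet, mem_ofPred_eq, nhds_prod_eq, tendsto_prod_iff']
  rfl

theorem mem_omegaLimitSet_prodMk_swap {s : ℕ → X} {t : ℕ → Y} {a : X} {b : Y} :
    (a, b) ∈ omegaLimitSet (fun k => (s k, t k)) ↔
      (b, a) ∈ omegaLimitSet (fun k => (t k, s k)) := by
  simp only [mem_omegaLimitSet_prodMk_iff]
  exact exists_congr fun _ => and_congr_right' and_comm

theorem exists_mem_omegaLimitSet_prodMk [CompactSpace Y] [FirstCountableTopology Y]
    {s : ℕ → X} (t : ℕ → Y) {a : X} (ha : a ∈ omegaLimitSet s) :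
    ∃ b, (a, b) ∈ omegaLimitSet (fun k => (s k, t k)) := by
  obtain ⟨φ, hφ, hsφ⟩ := ha
  obtain ⟨b, ψ, hψ, htψ⟩ := CompactSpace.tendsto_subseq (t ∘ φ)
  exact ⟨b, mem_omegaLimitSet_prodMk_iff.2 ⟨φ ∘ ψ, hφ.comp hψ, hsφ.comp hψ.tendsto_atTop, htψ⟩⟩

variable [FirstCountableTopology X]

theorem mem_omegaLimitSet_iff_mapClusterPt {w : ℕ → X} {a : X} :
    a ∈ omegaLimitSet w ↔ MapClusterPt a atTop w :=
  ⟨fun ⟨_, hφ, h⟩ => h.mapClusterPt.of_comp hφ.tendsto_atTop, MapClusterPt.tendsto_subseq⟩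

theorem isClosed_omegaLimitSet (w : ℕ → X) : IsClosed (omegaLimitSet w) := by
  rw [show omegaLimitSet w = {a | MapClusterPt a atTop w} from
    ext fun _ => mem_omegaLimitSet_iff_mapClusterPt]
  exact isClosed_setOfPred_clusterPt

theorem omegaLimitSet_comp_add_one (w : ℕ → X) :
    omegaLimitSet (fun k => w (k + 1)) = omegaLimitSet w := by
  ext a
  rw [mem_omegaLimitSet_iff_mapClusterPt, mem_omegaLimitSet_iff_mapClusterPt,
    ← Function.comp_def, mapClusterPt_comp, map_add_atTop_eq_nat]

theorem apply_mem_omegaLimitSet_iff (F : X ≃ₜ X) {w : ℕ → X} (hw : ∀ k, w (k + 1) = F (w k))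
    {a : X} : F a ∈ omegaLimitSet w ↔ a ∈ omegaLimitSet w := by
  calc F a ∈ omegaLimitSet w ↔ F a ∈ omegaLimitSet (F ∘ w) := by
        rw [← omegaLimitSet_comp_add_one w, funext hw]; rfl
    _ ↔ a ∈ omegaLimitSet w := mem_omegaLimitSet_comp_homeomorph F

end OmegaLimit

namespace SameTopType

variable {X Y : Type*} [TopologicalSpace X] [TopologicalSpace Y] {s : ℕ → X} {t : ℕ → Y}

theorem symm (hst : SameTopType s t) : SameTopType t s :=
  fun φ hφ => (hst φ hφ).symm

theorem comp (hst : SameTopType s t) {φ : ℕ → ℕ} (hφ : StrictMono φ) :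
    SameTopType (s ∘ φ) (t ∘ φ) :=
  fun ψ hψ => hst (φ ∘ ψ) (hφ.comp hψ)

/-- Two subsequences of `s` with a common limit merge into one convergent subsequence, hence the
corresponding subsequences of `t` have a common limit. -/
theorem rightUnique [T2Space Y] (hst : SameTopType s t) :
    Relator.RightUnique fun a b => (a, b) ∈ omegaLimitSet fun k => (s k, t k) := by
  intro a b b' hb hb'
  obtain ⟨φ, hφ, hsφ, htφ⟩ := mem_omegaLimitSet_prodMk_iff.1 hb
  obtain ⟨ψ, hψ, hsψ, htψ⟩ := mem_omegaLimitSet_prodMk_iff.1 hb'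
  obtain ⟨α, β, hα, hβ, hχ⟩ := exists_strictMono_interleave_comp hφ hψ
  obtain ⟨c, hc⟩ := (hst _ hχ).1 ⟨a, by
    rw [comp_interleave]
    exact tendsto_interleave (hsφ.comp hα.tendsto_atTop) (hsψ.comp hβ.tendsto_atTop)⟩
  rw [comp_interleave] at hc
  exact (tendsto_nhds_unique (htφ.comp hα.tendsto_atTop) hc.of_interleave_left).trans
    (tendsto_nhds_unique (htψ.comp hβ.tendsto_atTop) hc.of_interleave_right).symm

theorem leftUnique [T2Space X] (hst : SameTopType s t) :
    Relator.LeftUnique fun a b => (a, b) ∈ omegaLimitSet fun k => (s k, t k) :=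
  fun _ _ _ ha ha' => hst.symm.rightUnique (mem_omegaLimitSet_prodMk_swap.1 ha)
    (mem_omegaLimitSet_prodMk_swap.1 ha')

theorem eq_of_mem_omegaLimitSet_interleave [T2Space Y] {u : ℕ → X} {v : ℕ → Y} {a₀ : X} {b₀ b : Y}
    (hst : SameTopType (interleave (fun _ => a₀) u) (interleave (fun _ => b₀) v))
    (hb : (a₀, b) ∈ omegaLimitSet fun k => (u k, v k)) : b = b₀ := by
  refine hst.rightUnique (a := a₀) (omegaLimitSet_comp_subset strictMono_two_mul_add_one ?_)
    (omegaLimitSet_comp_subset strictMono_two_mul ?_)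
  · simpa only [Function.comp_def, interleave_two_mul_add_one] using hb
  · exact ⟨id, strictMono_id, by simpa [Function.comp_def] using tendsto_const_nhds⟩

theorem comp_homeomorph (s : ℕ → X) (h : X ≃ₜ Y) : SameTopType s (h ∘ s) := by
  refine fun φ _ => ⟨fun ⟨a, ha⟩ => ⟨h a, (h.continuous.tendsto a).comp ha⟩, fun ⟨b, hb⟩ => ?_⟩
  exact ⟨h.symm b, by simpa [Function.comp_def] using (h.symm.continuous.tendsto b).comp hb⟩

end SameTopType

theorem continuous_of_isClosed_graph {X Y : Type*} [TopologicalSpace X] [TopologicalSpace Y]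
    [CompactSpace Y] {h : X → Y} (hG : IsClosed {p : X × Y | h p.1 = p.2}) : Continuous h := by
  refine continuous_iff_isClosed.2 fun C hC => ?_
  have : h ⁻¹' C = Prod.fst '' ({p : X × Y | h p.1 = p.2} ∩ Prod.snd ⁻¹' C) := by
    ext a
    simp
  rw [this]
  exact isClosedMap_fst_of_compactSpace _ (hG.inter (hC.preimage continuous_snd))

theorem exists_homeomorph_of_isClosed {X Y : Type*} [TopologicalSpace X] [TopologicalSpace Y]
    [CompactSpace X] [CompactSpace Y] [T2Space Y] {G : Set (X × Y)} (hG : IsClosed G)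
    (htot : Relator.BiTotal fun a b => (a, b) ∈ G)
    (huniq : Relator.BiUnique fun a b => (a, b) ∈ G) :
    ∃ h : X ≃ₜ Y, ∀ a, (a, h a) ∈ G := by
  choose h hh using htot.1
  have hgraph : G = {p | h p.1 = p.2} :=
    ext fun ⟨a, b⟩ => ⟨huniq.2 (hh a), fun hab : h a = b => hab ▸ hh a⟩
  have hbij : Function.Bijective h :=
    ⟨fun a a' haa' => huniq.1 (hh a) (haa' ▸ hh a'),
      fun b => (htot.2 b).imp fun a ha => huniq.2 (hh a) ha⟩
  exact ⟨(continuous_of_isClosed_graph (hgraph ▸ hG)).homeoOfEquivCompactToT2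
    (f := Equiv.ofBijective h hbij), hh⟩

section Dynamics

variable {X Y : Type*} [TopologicalSpace X] [TopologicalSpace Y]

theorem iterZ_add_one (f : X ≃ₜ X) (m : ℤ) (a : X) : iterZ f (m + 1) a = f (iterZ f m a) := by
  rw [iterZ, iterZ, add_comm, zpow_one_add]
  rfl

theorem iterZ_mem_omegaLimitSet_iff [FirstCountableTopology X] (F : X ≃ₜ X) {w : ℕ → X}
    (hw : ∀ k, w (k + 1) = F (w k)) (n : ℤ) {a : X} :
    iterZ F n a ∈ omegaLimitSet w ↔ a ∈ omegaLimitSet w := by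
  induction n using Int.induction_on with
  | zero => rw [iterZ_zero]
  | succ k ih => rw [iterZ_add_one, apply_mem_omegaLimitSet_iff F hw, ih]
  | pred k ih => rw [← ih, ← apply_mem_omegaLimitSet_iff F hw, ← iterZ_add_one, sub_add_cancel]

theorem omegaLimitSet_eq_univ_of_dense_orbits [CompactSpace X] [FirstCountableTopology X]
    (F : X ≃ₜ X) (hF : ∀ a : X, Dense (range fun n : ℤ => iterZ F n a)) {w : ℕ → X}
    (hw : ∀ k, w (k + 1) = F (w k)) : omegaLimitSet w = univ := by
  obtain ⟨a, ha⟩ := CompactSpace.tendsto_subseq w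
  have horbit : range (fun n : ℤ => iterZ F n a) ⊆ omegaLimitSet w := by
    rintro _ ⟨n, rfl⟩
    exact (iterZ_mem_omegaLimitSet_iff F hw n).2 ha
  exact eq_univ_of_univ_subset <|
    (hF a).closure_eq ▸ (isClosed_omegaLimitSet w).closure_subset_iff.2 horbit

/-- The odd terms of the interleaved sequence. -/
def posOrbit (f : X ≃ₜ X) (x : X) (k : ℕ) : X := iterZ f ((k : ℤ) + 1) x

theorem posOrbit_zero (f : X ≃ₜ X) (x : X) : posOrbit f x 0 = f x := by
  simp [posOrbit, iterZ]

theorem posOrbit_succ (f : X ≃ₜ X) (x : X) (k : ℕ) :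
    posOrbit f x (k + 1) = f (posOrbit f x k) := by
  rw [posOrbit, posOrbit, Nat.cast_succ, iterZ_add_one]

theorem Function.Semiconj.posOrbit {h : X → Y} {f : X ≃ₜ X} {g : Y ≃ₜ Y} (hh : Semiconj h f g)
    (x : X) : h ∘ posOrbit f x = posOrbit g (h x) := by
  funext k
  induction k with
  | zero => simp only [Function.comp_apply, posOrbit_zero, hh x]
  | succ k ih => simp only [Function.comp_apply, posOrbit_succ, hh _, ← ih]

theorem sameTopType_interleave_posOrbit {f : X ≃ₜ X} {g : Y ≃ₜ Y} (h : X ≃ₜ Y)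
    (hh : Function.Semiconj h f g) (x : X) :
    SameTopType (interleave (fun _ => x) (posOrbit f x))
      (interleave (fun _ => h x) (posOrbit g (h x))) := by
  have : interleave (fun _ => h x) (posOrbit g (h x)) =
      h ∘ interleave (fun _ => x) (posOrbit f x) := by
    rw [comp_interleave, hh.posOrbit]
    rfl
  exact this ▸ SameTopType.comp_homeomorph _ h

theorem biTotal_omegaLimitSet_posOrbit [CompactSpace X] [FirstCountableTopology X]
    [CompactSpace Y] [FirstCountableTopology Y] {f : X ≃ₜ X} {g : Y ≃ₜ Y}
    (hf : ∀ a : X, Dense (range fun n : ℤ => iterZ f n a))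
    (hg : ∀ b : Y, Dense (range fun n : ℤ => iterZ g n b)) (x : X) (y : Y) :
    Relator.BiTotal fun a b => (a, b) ∈ omegaLimitSet fun k => (posOrbit f x k, posOrbit g y k) :=
  ⟨fun a => exists_mem_omegaLimitSet_prodMk _ <|
      (omegaLimitSet_eq_univ_of_dense_orbits f hf (posOrbit_succ f x)).symm ▸ mem_univ a,
    fun b => (exists_mem_omegaLimitSet_prodMk _ <|
      (omegaLimitSet_eq_univ_of_dense_orbits g hg (posOrbit_succ g y)).symm ▸ mem_univ b).imp
        fun _ => mem_omegaLimitSet_prodMk_swap.1⟩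

theorem map_mem_omegaLimitSet_posOrbit [FirstCountableTopology X] [FirstCountableTopology Y]
    {f : X ≃ₜ X} {g : Y ≃ₜ Y} {x : X} {y : Y} {a : X} {b : Y}
    (hab : (a, b) ∈ omegaLimitSet fun k => (posOrbit f x k, posOrbit g y k)) :
    (f a, g b) ∈ omegaLimitSet fun k => (posOrbit f x k, posOrbit g y k) :=
  (apply_mem_omegaLimitSet_iff (f.prodCongr g) fun k => by simp [posOrbit_succ]).2 hab

end Dynamics

/-- Corollary `BRBR`: pointed minimal compact systems `(X,f,x)` and
`(Y,g,y)` are conjugate iff the interleaved sequences `(x, f(x), x, f²(x), x, f³(x), …)`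
and `(y, g(y), y, g²(y), y, g³(y), …)` have the same topological type. -/
theorem pointed_min_conjugacy_iff_interleaved {X Y : Type*}
    [MetricSpace X] [CompactSpace X] [MetricSpace Y] [CompactSpace Y]
    (f : X ≃ₜ X) (g : Y ≃ₜ Y)
    (hf : ∀ a : X, Dense (Set.range fun n : ℤ => iterZ f n a))
    (hg : ∀ b : Y, Dense (Set.range fun n : ℤ => iterZ g n b))
    (x : X) (y : Y) :
    (∃ h : X ≃ₜ Y, (∀ a : X, h (f a) = g (h a)) ∧ h x = y) ↔
      SameTopType
        (fun n : ℕ => if n % 2 = 0 then x else iterZ f ((n / 2 : ℕ) + 1 : ℤ) x)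
        (fun n : ℕ => if n % 2 = 0 then y else iterZ g ((n / 2 : ℕ) + 1 : ℤ) y) := by
  change _ ↔ SameTopType (interleave (fun _ => x) (posOrbit f x))
    (interleave (fun _ => y) (posOrbit g y))
  refine ⟨fun ⟨h, hh, hxy⟩ => hxy ▸ sameTopType_interleave_posOrbit h hh x, fun hst => ?_⟩
  have hodd : SameTopType (posOrbit f x) (posOrbit g y) := by
    simpa only [interleave_comp_two_mul_add_one] using hst.comp strictMono_two_mul_add_one
  have htot := biTotal_omegaLimitSet_posOrbit hf hg x y
  obtain ⟨h, hR⟩ := exists_homeomorph_of_isClosed (isClosed_omegaLimitSet _) htot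
    ⟨hodd.leftUnique, hodd.rightUnique⟩
  obtain ⟨b, hb⟩ := htot.1 x
  exact ⟨h, fun a => hodd.rightUnique (hR (f a)) (map_mem_omegaLimitSet_posOrbit (hR a)),
    (hodd.rightUnique (hR x) hb).trans (hst.eq_of_mem_omegaLimitSet_interleave hb)⟩
end

section
/- Let X be a compact metric space, (x_i) a sequence of points of X, (p_i) a fast growing sequence, and z = z((p_i),(x_i)) the Oxtoby sequence. Let x be a point of the orbit closure O̅(z) with Aper(x) ≠ ∅, and let (n_i) be a sequence of integers with 0 ≤ n_i < p_i such that for every i, x has the same p_i-skeleton as S^{n_i} z. Then: (1) both n_i → ∞ and p_i − n_i → ∞ as i → ∞; (2) for every k ∈ Aper(x) and every i with −n_i < k < p_i − n_i, one has (S^{n_i} z)(k) = x_{i+1}. -/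
open Filter Topology

lemma perset_congr {X : Type*} {p : ℕ} {z : ℤ → X} {a b : ℤ}
    (hd : (p : ℤ) ∣ a - b) (hb : b ∈ PerSet p z) : a ∈ PerSet p z := by
  intro m hm
  have h1 : z m = z b := hb m (by simpa [sub_add_sub_cancel] using dvd_add hm hd)
  have h2 : z a = z b := hb a hd
  rw [h1, h2]

lemma perset_shift {X : Type*} {p : ℕ} {z : ℤ → X} {c m : ℤ} :
    m ∈ PerSet p (shiftZ c z) ↔ m + c ∈ PerSet p z := by
  constructor
  · intro h m' hm'
    have := h (m' - c) (by rw [show m' - c - m = m' - (m + c) by ring]; exact hm')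
    simpa [shiftZ, sub_add_cancel] using this
  · intro h m' hm'
    exact h (m' + c) (by rw [show m' + c - (m + c) = m' - m by ring]; exact hm')

lemma fg_pos {p : ℕ → ℕ} (hp : FastGrowing p) : ∀ i, 1 ≤ p i := by
  intro i; induction i with
  | zero => simp [hp.1]
  | succ i ih => have := hp.2.2.2 i; omega

lemma fg_ge {p : ℕ → ℕ} (hp : FastGrowing p) : ∀ i, i + 1 ≤ p i := by
  intro i; induction i with
  | zero => simp [hp.1]
  | succ i ih => have := hp.2.2.2 i; omega

lemma fg_dvd {p : ℕ → ℕ} (hp : FastGrowing p) {j i : ℕ} (h : j ≤ i) : p j ∣ p i := by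
  induction i with
  | zero => have : j = 0 := by omega
            simp [this]
  | succ i ih =>
    rcases Nat.lt_or_ge j (i + 1) with h' | h'
    · exact (ih (by omega)).trans (hp.2.1 i)
    · have : j = i + 1 := by omega
      simp [this]

lemma oxDefined_mono (p : ℕ → ℕ) : ∀ {j i : ℕ}, j ≤ i → oxDefined p j ⊆ oxDefined p i := by
  intro j i h
  induction i with
  | zero => have : j = 0 := by omega
            subst this; exact subset_rfl
  | succ i ih =>
    rcases Nat.eq_or_lt_of_le h with rfl | h'
    · exact subset_rfl
    · intro a ha
      have ha' := ih (by omega) ha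
      rw [oxDefined]
      exact Or.inl ha'

lemma oxDefined_add {p : ℕ → ℕ} (hp : FastGrowing p) :
    ∀ i (m t : ℤ), m ∈ oxDefined p i → m + t * (p i : ℤ) ∈ oxDefined p i := by
  intro i
  induction i with
  | zero => intro m t h; simp [oxDefined] at h
  | succ i ih =>
    have hq : (p (i + 1) : ℤ) = ((p (i + 1) / p i : ℕ) : ℤ) * (p i : ℤ) := by
      exact_mod_cast (Nat.div_mul_cancel (hp.2.1 i)).symm
    set q : ℤ := ((p (i + 1) / p i : ℕ) : ℤ) with hqdef
    intro m t h
    have key : ∀ m' : ℤ, m' ∈ oxDefined p i ↔ m' + t * (p (i + 1) : ℤ) ∈ oxDefined p i := by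
      intro m'
      constructor
      · intro h'
        have h2 := ih m' (t * q) h'
        rwa [show m' + t * q * (p i : ℤ) = m' + t * (p (i + 1) : ℤ) from by rw [hq]; ring] at h2
      · intro h'
        have h2 := ih _ (-(t * q)) h'
        rwa [show m' + t * (p (i + 1) : ℤ) + (-(t * q)) * (p i : ℤ) = m' from by rw [hq]; ring] at h2
    rw [oxDefined] at h ⊢
    rcases h with h | ⟨k, hk, h1, h2, h3⟩
    · exact Or.inl ((key m).mp h)
    · refine Or.inr ⟨k + t * q, ?_, ?_, ?_, ?_⟩
      · rcases hk with hk | hk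
        · exact Or.inl (dvd_add hk (dvd_mul_left q t))
        · refine Or.inr ?_
          rw [show k + t * q + 1 = (k + 1) + t * q by ring]
          exact dvd_add hk (dvd_mul_left q t)
      · rw [show (k + t * q) * (p i : ℤ) = k * (p i : ℤ) + t * (q * (p i : ℤ)) by ring, ← hq]
        linarith
      · rw [show (k + t * q + 1) * (p i : ℤ) = (k + 1) * (p i : ℤ) + t * (q * (p i : ℤ)) by ring, ← hq]
        linarith
      · exact fun hcon => h3 ((key m).mpr hcon)

lemma oxDefined_perset {X : Type*} {p : ℕ → ℕ} (hp : FastGrowing p) (x : ℕ → X) {i : ℕ} {m : ℤ}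
    (h : m ∈ oxDefined p i) : m ∈ PerSet (p i) (oxtoby p x) := by
  intro m' hd
  obtain ⟨t, ht⟩ := hd
  have hm' : m' = m + t * (p i : ℤ) := by linear_combination ht
  subst hm'
  have hSne : ({j | m ∈ oxDefined p j} : Set ℕ).Nonempty := ⟨i, h⟩
  set s := sInf {j | m ∈ oxDefined p j} with hs
  have hsmem : m ∈ oxDefined p s := Nat.sInf_mem hSne
  have hsle : s ≤ i := Nat.sInf_le h
  obtain ⟨c, hc⟩ : (p s : ℤ) ∣ (p i : ℤ) := Int.natCast_dvd_natCast.mpr (fg_dvd hp hsle)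
  have h2 : m + t * (p i : ℤ) ∈ oxDefined p s := by
    have h3 := oxDefined_add hp s m (t * c) hsmem
    rwa [show m + t * c * (p s : ℤ) = m + t * (p i : ℤ) from by rw [hc]; ring] at h3
  have h3 : sInf {j | m + t * (p i : ℤ) ∈ oxDefined p j} = s := by
    apply le_antisymm (Nat.sInf_le h2)
    set s' := sInf {j | m + t * (p i : ℤ) ∈ oxDefined p j} with hs'
    have hne2 : ({j | m + t * (p i : ℤ) ∈ oxDefined p j} : Set ℕ).Nonempty := ⟨s, h2⟩
    have hs'mem : m + t * (p i : ℤ) ∈ oxDefined p s' := Nat.sInf_mem hne2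
    by_contra hlt
    push_neg at hlt
    have hs'le : s' ≤ i := le_trans (le_of_lt hlt) hsle
    obtain ⟨c', hc'⟩ : (p s' : ℤ) ∣ (p i : ℤ) := Int.natCast_dvd_natCast.mpr (fg_dvd hp hs'le)
    have hback : m ∈ oxDefined p s' := by
      have h4 := oxDefined_add hp s' _ (-(t * c')) hs'mem
      rwa [show m + t * (p i : ℤ) + (-(t * c')) * (p s' : ℤ) = m from by rw [hc']; ring] at h4
    have : s ≤ s' := Nat.sInf_le hback
    omega
  show oxtoby p x (m + t * (p i : ℤ)) = oxtoby p x m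
  simp only [oxtoby]
  rw [h3, ← hs]

lemma oxDefined_window {p : ℕ → ℕ} (hp : FastGrowing p) (i : ℕ) {m : ℤ}
    (h1 : -(p i : ℤ) ≤ m) (h2 : m < (p i : ℤ)) : m ∈ oxDefined p (i + 1) := by
  rw [oxDefined]
  by_cases h : m ∈ oxDefined p i
  · exact Or.inl h
  · refine Or.inr ?_
    rcases le_or_gt 0 m with hm | hm
    · exact ⟨0, Or.inl (dvd_zero _), by simpa using hm, by simpa using h2, h⟩
    · exact ⟨-1, Or.inr (by norm_num), by simpa using h1, by simpa using hm, h⟩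

/-- Lemma `Will1`: if `y` in the orbit closure of the Oxtoby sequence `z`
has nonempty aperiodic part and has the same `p_i`-skeleton as `S^{n_i} z` with
`0 ≤ n_i < p_i`, then `n_i → ∞` and `p_i - n_i → ∞`, and for `k` aperiodic with
`-n_i < k < p_i - n_i` one has `(S^{n_i} z)(k) = x_{i+1}`. -/
theorem oxtoby_aperiodic_skeleton {X : Type*} [MetricSpace X] [CompactSpace X]
    (x : ℕ → X) (p : ℕ → ℕ) (hp : FastGrowing p)
    (y : ℤ → X) (hy : y ∈ orbitClosure (oxtoby p x))
    (haper : ∃ k : ℤ, k ∉ PerFull y)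
    (n : ℕ → ℤ) (hn : ∀ i, 0 ≤ n i ∧ n i < (p i : ℤ))
    (hsk : ∀ i, SamePSkeleton (p i) y (shiftZ (n i) (oxtoby p x))) :
    (Tendsto n atTop atTop ∧ Tendsto (fun i => (p i : ℤ) - n i) atTop atTop) ∧
      ∀ k : ℤ, k ∉ PerFull y → ∀ i : ℕ, -(n i) < k → k < (p i : ℤ) - n i →
        shiftZ (n i) (oxtoby p x) k = x (i + 1) := by
  obtain ⟨k0, hk0⟩ := haper
  have hpos := fg_pos hp
  have F : ∀ k : ℤ, k ∉ PerFull y → ∀ i : ℕ, k + n i ∉ PerSet (p i) (oxtoby p x) := by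
    intro k hk i hmem
    exact hk ⟨p i, hpos i, by rw [(hsk i).1]; exact perset_shift.mpr hmem⟩
  have Q : ∀ j : ℕ, |k0| ≤ (p j : ℤ) →
      (p j : ℤ) - |k0| ≤ n (j + 1) ∧ (p j : ℤ) - |k0| ≤ (p (j + 1) : ℤ) - n (j + 1) := by
    intro j hj
    have hF := F k0 hk0 (j + 1)
    have hwin : ∀ m' : ℤ, ((p (j + 1) : ℤ)) ∣ (k0 + n (j + 1)) - m' →
        ¬(-(p j : ℤ) ≤ m' ∧ m' < (p j : ℤ)) := by
      rintro m' hd ⟨w1, w2⟩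
      exact hF (perset_congr hd (oxDefined_perset hp x (oxDefined_window hp j w1 w2)))
    have h1 := hwin (k0 + n (j + 1)) (by simp)
    have h2 := hwin (k0 + n (j + 1) - (p (j + 1) : ℤ)) (by rw [sub_sub_cancel])
    have ha1 : -|k0| ≤ k0 := neg_abs_le k0
    have ha2 : k0 ≤ |k0| := le_abs_self k0
    have hn1 := (hn (j + 1)).1
    have hn2 := (hn (j + 1)).2
    have hA : (p j : ℤ) ≤ k0 + n (j + 1) := by
      by_contra hA
      exact h1 ⟨by linarith, by linarith⟩
    have hB : k0 + n (j + 1) - (p (j + 1) : ℤ) < -(p j : ℤ) := by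
      by_contra hB
      exact h2 ⟨by linarith, by linarith⟩
    constructor <;> linarith
  have key1 : ∀ b : ℤ, ∀ j : ℕ, |k0| + |b| + 1 ≤ j + 1 →
      b ≤ n (j + 1) ∧ b ≤ (p (j + 1) : ℤ) - n (j + 1) := by
    intro b j hb
    have hg : ((j : ℤ) + 1) ≤ (p j : ℤ) := by exact_mod_cast fg_ge hp j
    have ha0 : (0 : ℤ) ≤ |k0| := abs_nonneg _
    have hb0 : b ≤ |b| := le_abs_self b
    have hb0' : (0 : ℤ) ≤ |b| := abs_nonneg _
    have hQ := Q j (by linarith)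
    exact ⟨by linarith [hQ.1], by linarith [hQ.2]⟩
  refine ⟨⟨?_, ?_⟩, ?_⟩
  · rw [tendsto_atTop]
    intro b
    rw [eventually_atTop]
    refine ⟨(|k0| + |b| + 1).toNat + 1, fun i hi => ?_⟩
    obtain ⟨j, rfl⟩ : ∃ j, i = j + 1 := ⟨i - 1, by omega⟩
    refine (key1 b j ?_).1
    have := Int.toNat_of_nonneg (show (0:ℤ) ≤ |k0| + |b| + 1 by positivity)
    have hi' : ((|k0| + |b| + 1).toNat : ℤ) + 1 ≤ (j : ℤ) + 1 := by exact_mod_cast hi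
    linarith
  · rw [tendsto_atTop]
    intro b
    rw [eventually_atTop]
    refine ⟨(|k0| + |b| + 1).toNat + 1, fun i hi => ?_⟩
    obtain ⟨j, rfl⟩ : ∃ j, i = j + 1 := ⟨i - 1, by omega⟩
    refine (key1 b j ?_).2
    have := Int.toNat_of_nonneg (show (0:ℤ) ≤ |k0| + |b| + 1 by positivity)
    have hi' : ((|k0| + |b| + 1).toNat : ℤ) + 1 ≤ (j : ℤ) + 1 := by exact_mod_cast hi
    linarith
  · intro k hk i hlow hhigh
    have hm1 : (0 : ℤ) ≤ k + n i := by linarith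
    have hm2 : k + n i < (p i : ℤ) := by linarith
    have hnotPer := F k hk i
    have hnotD : k + n i ∉ oxDefined p i := fun h => hnotPer (oxDefined_perset hp x h)
    have hD : k + n i ∈ oxDefined p (i + 1) := by
      rw [oxDefined]
      exact Or.inr ⟨0, Or.inl (dvd_zero _), by simpa using hm1, by simpa using hm2, hnotD⟩
    have hsinf : sInf {j | k + n i ∈ oxDefined p j} = i + 1 := by
      apply le_antisymm (Nat.sInf_le hD)
      have hne : ({j | k + n i ∈ oxDefined p j} : Set ℕ).Nonempty := ⟨i + 1, hD⟩
      have hmem := Nat.sInf_mem hne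
      by_contra hlt
      push_neg at hlt
      exact hnotD (oxDefined_mono p (by omega) hmem)
    show oxtoby p x (k + n i) = x (i + 1)
    simp only [oxtoby]
    rw [hsinf]
end
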